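/- arXiv:2005.14365 — 10 statements merged into one kernel-verified Lean document; each statement's English description precedes it below -/
import Mathlib

section
/- Every convenient order is Gorenstein. That is, if K is a CM field and R is an order in K such that (1) R is stable under complex conjugation, (2) the real subring R⁺ = R ∩ K⁺ is a Gorenstein order of K⁺, and (3) the trace dual R† of R is generated as an R-module by its pure imaginary elements, then the trace dual R† is an invertible fractional R-ideal. -/
/-!
Over a Gorenstein order `O`, every lattice `A` whose multiplier ring `A / A` is `O` is invertible:
`A · A†` is dual to `A† / A† = A / A = O`, so `A · A† = O†`, and multiplying by the inverse of
`O†` gives `A · (O / A) = O`.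

Fix a nonzero pure imaginary `z ∈ K`. A pure imaginary element is `z` times an element of `K⁺`,
so the pure imaginary part of `R†` is `z · M` for a lattice `M ⊂ K⁺`, and `R† = R · z · M`.
Multipliers of `M` multiply `R†`, hence lie in `(R† / R†) ∩ K⁺ = R ∩ K⁺ = R⁺`. Since `R⁺` is
Gorenstein, `M` is invertible over `R⁺`, and `z⁻¹ · R · M⁻¹` inverts `R†`.
-/

open NumberField Polynomial

noncomputable section

/-- The trace dual `R† = {x ∈ F : Tr_{F/ℚ}(x·r) ∈ ℤ for all r ∈ R}` of a subring `R`
of a number field `F`, as an `R`-submodule of `F`. -/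
def traceDual (F : Type*) [Field F] [NumberField F] (R : Subring F) : Submodule R F where
  carrier := {x : F | ∀ r ∈ R, ∃ n : ℤ, Algebra.trace ℚ F (x * r) = (n : ℚ)}
  add_mem' := by
    intro a b ha hb r hr
    obtain ⟨m, hm⟩ := ha r hr
    obtain ⟨k, hk⟩ := hb r hr
    exact ⟨m + k, by rw [add_mul, map_add, hm, hk]; push_cast; ring⟩
  zero_mem' := by
    intro r hr
    exact ⟨0, by simp⟩
  smul_mem' := by
    intro c x hx r hr
    obtain ⟨k, hk⟩ := hx ((c : F) * r) (R.mul_mem c.2 hr)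
    refine ⟨k, ?_⟩
    rw [← hk]
    congr 1
    rw [Subring.smul_def, smul_eq_mul]
    ring

/-- A fractional ideal of an order: a nonzero finitely generated `R`-submodule of `F`. -/
def IsFracIdeal (F : Type*) [Field F] (R : Subring F) (I : Submodule R F) : Prop :=
  I ≠ ⊥ ∧ I.FG

/-- Invertibility of an `R`-submodule of `F`: there is another submodule `J` with `I·J = R`. -/
def IsInvertibleIdeal (F : Type*) [Field F] (R : Subring F) (I : Submodule R F) : Prop :=
  ∃ J : Submodule R F, I * J = 1

/-- An order of a number field `F`: a subring that is finitely generated as a `ℤ`-module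
and contains a `ℚ`-basis of `F`. -/
def IsOrder (F : Type*) [Field F] [NumberField F] (R : Subring F) : Prop :=
  Module.Finite ℤ R ∧ Submodule.span ℚ (R : Set F) = ⊤

/-- A Gorenstein order: the trace dual is an invertible fractional ideal. -/
def IsGorenstein (F : Type*) [Field F] [NumberField F] (R : Subring F) : Prop :=
  IsInvertibleIdeal F R (traceDual F R)

end

open Submodule

theorem Submodule.mul_div_le {R A : Type*} [CommSemiring R] [CommSemiring A] [Algebra R A]
    (I J : Submodule R A) : I * (J / I) ≤ J :=
  mul_le.mpr fun a ha x hx ↦ mul_comm x a ▸ hx a ha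

theorem Submodule.div_self_le_mul_div_self {R A : Type*} [CommSemiring R] [CommSemiring A]
    [Algebra R A] (I J : Submodule R A) : I / I ≤ (J * I) / (J * I) := by
  rw [le_div_iff_mul_le, mul_left_comm, mul_comm (I / I)]
  exact mul_le_mul_right (mul_div_le I I) J

section FullLattice

variable {F : Type*} [Field F] [CharZero F]

def IsFullLattice (L : Submodule ℤ F) : Prop :=
  L.FG ∧ span ℚ (L : Set F) = ⊤

theorem exists_int_smul_mem_of_span_eq_top {L : Submodule ℤ F} (hL : span ℚ (L : Set F) = ⊤)
    (x : F) : ∃ n : ℤ, n ≠ 0 ∧ n • x ∈ L := by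
  have hx : x ∈ span ℚ (L : Set F) := hL ▸ mem_top
  induction hx using span_induction with
  | mem y hy => exact ⟨1, one_ne_zero, by rwa [one_smul]⟩
  | zero => exact ⟨1, one_ne_zero, by rw [smul_zero]; exact L.zero_mem⟩
  | add y y' _ _ hy hy' =>
    obtain ⟨n, hn0, hn⟩ := hy
    obtain ⟨n', hn0', hn'⟩ := hy'
    refine ⟨n' * n, mul_ne_zero hn0' hn0, ?_⟩
    rw [smul_add, mul_smul, mul_comm, mul_smul]
    exact L.add_mem (L.smul_mem n' hn) (L.smul_mem n hn')
  | smul q y _ hy =>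
    obtain ⟨n, hn0, hn⟩ := hy
    refine ⟨q.den * n, mul_ne_zero (by exact_mod_cast q.den_nz) hn0, ?_⟩
    have : ((q.den * n : ℤ) : F) * (q * y) = q.num * (n * y) := by
      push_cast
      have hq : (q : F) * q.den = q.num := by exact_mod_cast q.mul_den_eq_num
      linear_combination ((n : F) * y) * hq
    rw [zsmul_eq_mul, Rat.smul_def, this, ← zsmul_eq_mul, ← zsmul_eq_mul]
    exact L.smul_mem _ hn

theorem IsFullLattice.exists_basis {L : Submodule ℤ F} (hL : IsFullLattice L) :
    ∃ (n : ℕ) (b : Module.Basis (Fin n) ℚ F), L = span ℤ (Set.range b) := by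
  have : Module.Finite ℤ L := Module.Finite.iff_fg.mpr hL.1
  have : Module.Free ℤ L := Module.free_of_finite_type_torsion_free'
  let b₀ := Module.Free.chooseBasis ℤ L
  have hspan : span ℤ (Set.range (L.subtype ∘ b₀)) = L := by
    rw [Set.range_comp, ← map_span, b₀.span_eq, Submodule.map_top, range_subtype]
  have hli : LinearIndependent ℚ (L.subtype ∘ b₀) :=
    (LinearIndependent.iff_fractionRing ℤ ℚ).mp (b₀.linearIndependent.map' _ L.ker_subtype)
  have htop : ⊤ ≤ span ℚ (Set.range (L.subtype ∘ b₀)) := by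
    rw [← span_span_of_tower ℤ, hspan, hL.2]
  let b := (Module.Basis.mk hli htop).reindex (Fintype.equivFin _)
  refine ⟨_, b, ?_⟩
  rw [Module.Basis.range_reindex, Module.Basis.coe_mk, hspan]

theorem IsFullLattice.mul {A B : Submodule ℤ F} (hA : IsFullLattice A) (hB : IsFullLattice B) :
    IsFullLattice (A * B) := by
  refine ⟨hA.1.mul hB.1, ?_⟩
  rw [mul_eq_span_mul_set, span_span_of_tower, ← span_mul_span, hA.2, hB.2, eq_top_iff]
  exact fun x _ ↦ by simpa using mul_mem_mul (mem_top (x := x)) (mem_top (x := (1 : F)))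

end FullLattice

section LatticeDual

variable {F : Type*} [Field F] [NumberField F]

noncomputable def latticeDual (L : Submodule ℤ F) : Submodule ℤ F :=
  (Algebra.traceForm ℚ F).dualSubmodule L

theorem mem_latticeDual {L : Submodule ℤ F} {x : F} :
    x ∈ latticeDual L ↔ ∀ y ∈ L, Algebra.trace ℚ F (x * y) ∈ (1 : Submodule ℤ ℚ) :=
  Iff.rfl

theorem IsFullLattice.latticeDual_latticeDual {L : Submodule ℤ F} (hL : IsFullLattice L) :
    latticeDual (latticeDual L) = L := by
  obtain ⟨n, b, rfl⟩ := hL.exists_basis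
  exact (Algebra.traceForm ℚ F).dualSubmodule_dualSubmodule_of_basis
    (traceForm_nondegenerate ℚ F) (Algebra.traceForm_isSymm ℚ) b

theorem isFullLattice_latticeDual {L : Submodule ℤ F} (hL : IsFullLattice L) :
    IsFullLattice (latticeDual L) := by
  obtain ⟨n, b, rfl⟩ := hL.exists_basis
  rw [latticeDual,
    LinearMap.BilinForm.dualSubmodule_span_of_basis _ (traceForm_nondegenerate ℚ F)]
  exact ⟨fg_span (Set.finite_range _), by rw [span_span_of_tower, Module.Basis.span_eq]⟩

theorem latticeDual_mul (A B : Submodule ℤ F) : latticeDual (A * B) = latticeDual A / B := by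
  ext x
  simp only [mem_div_iff_forall_mul_mem, mem_latticeDual]
  constructor
  · intro hx b hb a ha
    simpa only [mul_assoc, mul_comm a b] using hx (a * b) (mul_mem_mul ha hb)
  · intro hx y hy
    induction hy using Submodule.mul_induction_on' with
    | mem_mul_mem a ha b hb => simpa only [mul_right_comm x, ← mul_assoc] using hx b hb a ha
    | add y _ y' _ h h' => simpa only [mul_add, map_add] using add_mem h h'

theorem div_self_le_latticeDual_div_self (A : Submodule ℤ F) :
    A / A ≤ latticeDual A / latticeDual A := by
  intro x hx y hy
  rw [mem_latticeDual] at hy ⊢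
  intro a ha
  simpa only [mul_left_comm x, mul_assoc] using hy (x * a) (hx a ha)

theorem IsFullLattice.latticeDual_div_self {A : Submodule ℤ F} (hA : IsFullLattice A) :
    latticeDual A / latticeDual A = A / A := by
  refine le_antisymm ?_ (div_self_le_latticeDual_div_self A)
  simpa only [hA.latticeDual_latticeDual] using
    div_self_le_latticeDual_div_self (latticeDual A)

theorem IsFullLattice.mul_div_eq_of_latticeDual_mul_eq {O A U : Submodule ℤ F}
    (hA : IsFullLattice A) (hAA : A / A = O) (hU : latticeDual O * U = O) :
    A * (O / A) = O := by
  have hdual : A * latticeDual A = latticeDual O := by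
    rw [← (hA.mul (isFullLattice_latticeDual hA)).latticeDual_latticeDual, latticeDual_mul,
      hA.latticeDual_div_self, hAA]
  have hUA : U * latticeDual A ≤ O / A := by
    rw [Submodule.le_div_iff_mul_le, ← hU, ← hdual]
    exact le_of_eq (by ring)
  refine le_antisymm (Submodule.mul_div_le A O) ?_
  calc O = A * (U * latticeDual A) := by rw [← hU, ← hdual]; ring
    _ ≤ A * (O / A) := mul_le_mul_right hUA A

end LatticeDual

section Order

variable {F : Type*} [Field F]

def Subring.toIntSubmodule (R : Subring F) : Submodule ℤ F :=
  R.toAddSubgroup.toIntSubmodule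

@[simp]
theorem Subring.mem_toIntSubmodule {R : Subring F} {x : F} : x ∈ R.toIntSubmodule ↔ x ∈ R :=
  Iff.rfl

theorem Subring.toIntSubmodule_mul_self (R : Subring F) :
    R.toIntSubmodule * R.toIntSubmodule = R.toIntSubmodule :=
  le_antisymm (mul_le.mpr fun _ ha _ hb ↦ R.mul_mem ha hb)
    fun x hx ↦ mul_one x ▸ mul_mem_mul hx R.one_mem

theorem Subring.toIntSubmodule_div_self (R : Subring F) :
    R.toIntSubmodule / R.toIntSubmodule = R.toIntSubmodule :=
  le_antisymm (fun x hx ↦ mul_one x ▸ hx 1 R.one_mem)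
    (Submodule.le_div_iff_mul_le.mpr R.toIntSubmodule_mul_self.le)

theorem Subring.restrictScalars_one (R : Subring F) :
    (1 : Submodule R F).restrictScalars ℤ = R.toIntSubmodule := by
  ext x
  rw [restrictScalars_mem, mem_one]
  exact ⟨fun ⟨y, hy⟩ ↦ hy ▸ y.2, fun hx ↦ ⟨⟨x, hx⟩, rfl⟩⟩

theorem Subring.restrictScalars_span (R : Subring F) (S : Submodule ℤ F) :
    (span R (S : Set F)).restrictScalars ℤ = R.toIntSubmodule * S := by
  refine le_antisymm (fun x hx ↦ ?_) (mul_le.mpr fun r hr s hs ↦ ?_)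
  · induction hx using span_induction with
    | mem s hs => exact one_mul s ▸ mul_mem_mul R.one_mem hs
    | zero => exact zero_mem _
    | add _ _ _ _ h h' => exact add_mem h h'
    | smul r s _ h =>
      have := mul_mem_mul (R.mem_toIntSubmodule.mpr r.2) h
      rwa [← mul_assoc, R.toIntSubmodule_mul_self] at this
  · exact (span R (S : Set F)).smul_mem ⟨r, hr⟩ (subset_span hs)

theorem isInvertibleIdeal_iff {R : Subring F} {I : Submodule R F} :
    IsInvertibleIdeal F R I ↔
      ∃ J : Submodule ℤ F,
        R.toIntSubmodule * J ≤ J ∧ I.restrictScalars ℤ * J = R.toIntSubmodule := by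
  constructor
  · rintro ⟨J, hJ⟩
    refine ⟨J.restrictScalars ℤ, mul_le.mpr fun r hr j hj ↦ J.smul_mem ⟨r, hr⟩ hj, ?_⟩
    rw [← restrictScalars_mul, hJ, R.restrictScalars_one]
  · rintro ⟨J, hRJ, hIJ⟩
    let J' : Submodule R F :=
      { J with smul_mem' := fun r _ hx ↦ hRJ (mul_mem_mul r.2 hx) }
    refine ⟨J', restrictScalars_injective ℤ _ _ ?_⟩
    rw [restrictScalars_mul, R.restrictScalars_one, ← hIJ]
    rfl

variable [NumberField F]

theorem IsOrder.isFullLattice {R : Subring F} (hR : IsOrder F R) :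
    IsFullLattice R.toIntSubmodule := by
  refine ⟨?_, hR.2⟩
  have : R.toIntSubmodule = LinearMap.range R.subtype.toAddMonoidHom.toIntLinearMap := by
    ext x
    exact ⟨fun hx ↦ ⟨⟨x, hx⟩, rfl⟩, fun ⟨y, hy⟩ ↦ hy ▸ y.2⟩
  rw [this, LinearMap.range_eq_map]
  exact hR.1.fg_top.map _

theorem Subring.restrictScalars_traceDual (R : Subring F) :
    (traceDual F R).restrictScalars ℤ = latticeDual R.toIntSubmodule := by
  ext x
  simp only [restrictScalars_mem, mem_latticeDual, mem_one, algebraMap_int_eq, eq_intCast]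
  exact forall₂_congr fun _ _ ↦ exists_congr fun _ ↦ eq_comm

end Order

section PureImaginary

variable {Kp K : Type*} [Field Kp] [Field K] [Algebra Kp K] (conj : K ≃ₐ[Kp] K)

def pureImaginary : Submodule ℤ K :=
  LinearMap.ker ((conj.toLinearMap + LinearMap.id).restrictScalars ℤ)

variable {conj}

theorem mem_pureImaginary {x : K} : x ∈ pureImaginary conj ↔ conj x = -x := by
  simp [pureImaginary, add_eq_zero_iff_eq_neg]

theorem exists_ne_zero_mem_pureImaginary (hne : conj ≠ AlgEquiv.refl)
    (hinv : ∀ x, conj (conj x) = x) : ∃ z ≠ 0, z ∈ pureImaginary conj := by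
  obtain ⟨w, hw⟩ : ∃ w, conj w ≠ w := by
    by_contra! h
    exact hne (AlgEquiv.ext h)
  refine ⟨w - conj w, sub_ne_zero.mpr hw.symm, ?_⟩
  rw [mem_pureImaginary, map_sub, hinv, neg_sub]

theorem algebraMap_mul_mem_pureImaginary (u : Kp) {x : K} (hx : x ∈ pureImaginary conj) :
    algebraMap Kp K u * x ∈ pureImaginary conj := by
  rw [mem_pureImaginary] at hx ⊢
  rw [map_mul, AlgEquiv.commutes, hx, mul_neg]

local notation "ι" => AlgHom.toLinearMap (IsScalarTower.toAlgHom ℤ Kp K)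

variable (Kp) (z : K)

def realCoeffs (S : Submodule ℤ K) : Submodule ℤ Kp :=
  S.comap (LinearMap.mulLeft ℤ z ∘ₗ ι)

theorem mem_realCoeffs {S : Submodule ℤ K} {u : Kp} :
    u ∈ realCoeffs Kp z S ↔ z * algebraMap Kp K u ∈ S :=
  Iff.rfl

variable {Kp z}

theorem span_mul_map_realCoeffs (hz0 : z ≠ 0) (hz : z ∈ pureImaginary conj)
    (hfix : ∀ x, conj x = x → x ∈ (algebraMap Kp K).range)
    {S : Submodule ℤ K} (hS : S ≤ pureImaginary conj) :
    span ℤ {z} * (realCoeffs Kp z S).map ι = S := by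
  refine le_antisymm (mul_le.mpr fun y hy _ ⟨u, hu, hv⟩ ↦ ?_) fun s hs ↦ ?_
  · obtain ⟨n, rfl⟩ := mem_span_singleton.mp hy
    rw [← hv, smul_mul_assoc]
    exact S.smul_mem n hu
  · have h : conj (z⁻¹ * s) = z⁻¹ * s := by
      rw [map_mul, map_inv₀, mem_pureImaginary.mp hz, mem_pureImaginary.mp (hS hs), inv_neg,
        neg_mul_neg]
    obtain ⟨u, hu⟩ := hfix _ h
    have hzu : z * algebraMap Kp K u = s := by rw [hu, mul_inv_cancel_left₀ hz0]
    exact mem_span_singleton_mul.mpr ⟨_, ⟨u, (mem_realCoeffs Kp z).mpr (hzu ▸ hs), rfl⟩, hzu⟩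

theorem isFullLattice_realCoeffs [CharZero Kp] [CharZero K] (hz0 : z ≠ 0)
    (hz : z ∈ pureImaginary conj) {T : Submodule ℤ K} (hT : IsFullLattice T) :
    IsFullLattice (realCoeffs Kp z (T ⊓ pureImaginary conj)) := by
  have hinj : Function.Injective (LinearMap.mulLeft ℤ z ∘ₗ ι) := fun _ _ h ↦
    (algebraMap Kp K).injective (mul_left_cancel₀ hz0 h)
  refine ⟨fg_of_fg_map_injective _ hinj (hT.1.of_le ((map_comap_le _ _).trans inf_le_left)),
    eq_top_iff.mpr fun u _ ↦ ?_⟩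
  obtain ⟨n, hn0, hn⟩ := exists_int_smul_mem_of_span_eq_top hT.2 (z * algebraMap Kp K u)
  have hnu : n • u ∈ realCoeffs Kp z (T ⊓ pureImaginary conj) := by
    rw [mem_realCoeffs, map_zsmul, mul_smul_comm]
    exact ⟨hn, (pureImaginary conj).smul_mem n
      (mul_comm z _ ▸ algebraMap_mul_mem_pureImaginary u hz)⟩
  have hu : u = (n : ℚ)⁻¹ • n • u := by
    rw [← Int.cast_smul_eq_zsmul ℚ, smul_smul, inv_mul_cancel₀ (by exact_mod_cast hn0), one_smul]
  exact hu ▸ smul_mem _ _ (subset_span hnu)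

theorem realCoeffs_div_self (hz0 : z ≠ 0) (hz : z ∈ pureImaginary conj)
    (hfix : ∀ x, conj x = x → x ∈ (algebraMap Kp K).range) (R : Subring K) {T : Submodule ℤ K}
    (hTT : T / T = R.toIntSubmodule) (hT : R.toIntSubmodule * (T ⊓ pureImaginary conj) = T) :
    realCoeffs Kp z (T ⊓ pureImaginary conj) / realCoeffs Kp z (T ⊓ pureImaginary conj) =
      (R.comap (algebraMap Kp K)).toIntSubmodule := by
  set M := realCoeffs Kp z (T ⊓ pureImaginary conj)
  refine le_antisymm (fun u hu ↦ ?_) fun u hu m hm ↦ ?_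
  · have hιu : algebraMap Kp K u ∈ M.map ι / M.map ι := by
      rintro _ ⟨m, hm, rfl⟩
      exact ⟨u * m, hu m hm, map_mul (algebraMap Kp K) u m⟩
    replace hιu := div_self_le_mul_div_self _ (R.toIntSubmodule * span ℤ {z}) hιu
    rwa [mul_assoc, span_mul_map_realCoeffs hz0 hz hfix inf_le_right, hT, hTT] at hιu
  · have hRT : R.toIntSubmodule * T ≤ T := by
      rw [← hTT, mul_comm]
      exact mul_div_le T T
    rw [mem_realCoeffs, map_mul, mul_left_comm]
    exact ⟨hRT (mul_mem_mul hu hm.1), algebraMap_mul_mem_pureImaginary u hm.2⟩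

theorem exists_mul_eq_of_realCoeffs_mul_eq (hz0 : z ≠ 0) (hz : z ∈ pureImaginary conj)
    (hfix : ∀ x, conj x = x → x ∈ (algebraMap Kp K).range) (R : Subring K)
    {S : Submodule ℤ K} (hS : S ≤ pureImaginary conj) {N : Submodule ℤ Kp}
    (hN : realCoeffs Kp z S * N = (R.comap (algebraMap Kp K)).toIntSubmodule) :
    ∃ J : Submodule ℤ K, R.toIntSubmodule * J ≤ J ∧
      R.toIntSubmodule * S * J = R.toIntSubmodule := by
  set O := R.toIntSubmodule
  have hzz : span ℤ {z} * span ℤ {z⁻¹} = 1 := by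
    rw [span_mul_span, Set.singleton_mul_singleton, mul_inv_cancel₀ hz0, one_eq_span]
  have hOι : O * (R.comap (algebraMap Kp K)).toIntSubmodule.map ι = O :=
    le_antisymm (mul_le.mpr fun _ hx _ ⟨_, hu, hy⟩ ↦ hy ▸ R.mul_mem hx hu)
      fun x hx ↦ mul_one x ▸ mul_mem_mul hx ⟨1, (R.comap _).one_mem, map_one (algebraMap Kp K)⟩
  refine ⟨span ℤ {z⁻¹} * (O * N.map ι), ?_, ?_⟩
  · rw [mul_left_comm, ← mul_assoc O, R.toIntSubmodule_mul_self]
  · rw [← span_mul_map_realCoeffs hz0 hz hfix hS]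
    calc _ = span ℤ {z} * span ℤ {z⁻¹} * (O * O) * (realCoeffs Kp z S * N).map ι := by
          rw [Submodule.map_mul]; ring
      _ = O := by rw [hzz, one_mul, R.toIntSubmodule_mul_self, hN, hOι]

end PureImaginary

theorem convenient_order_is_Gorenstein_general
    (Kp K : Type*) [Field Kp] [NumberField Kp] [Field K] [NumberField K] [Algebra Kp K]
    -- `K/Kp` is a CM extension: `Kp` is totally real, `K` is totally imaginary,
    -- `[K : Kp] = 2`, and `conj` is the nontrivial (involutive) automorphism of `K/Kp`,
    -- whose fixed field is exactly `Kp`.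
    (conj : K ≃ₐ[Kp] K)
    (hconj_ne : conj ≠ AlgEquiv.refl)
    (hconj_inv : ∀ x, conj (conj x) = x)
    (hfix : ∀ x : K, conj x = x ↔ x ∈ (algebraMap Kp K).range)
    -- `R` is an order of `K` ...
    (R : Subring K) (hR : IsOrder K R)
    -- ... whose real subring `R⁺ = R ∩ K⁺` is Gorenstein ...
    (hGorplus : IsGorenstein Kp (R.comap (algebraMap Kp K)))
    -- ... and whose trace dual is generated as an `R`-module by its pure imaginary elements.
    (hpure : Submodule.span R {x : K | x ∈ traceDual K R ∧ conj x = -x} = traceDual K R) :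
    -- Then the trace dual of `R` is an invertible fractional `R`-ideal.
    IsInvertibleIdeal K R (traceDual K R) := by
  set O := R.toIntSubmodule
  set S := latticeDual O ⊓ pureImaginary conj
  have hO : IsFullLattice O := hR.isFullLattice
  have hfix' : ∀ x, conj x = x → x ∈ (algebraMap Kp K).range := fun x ↦ (hfix x).mp
  obtain ⟨z, hz0, hz⟩ := exists_ne_zero_mem_pureImaginary hconj_ne hconj_inv
  have hTT : latticeDual O / latticeDual O = O := by
    rw [hO.latticeDual_div_self, R.toIntSubmodule_div_self]
  have hT : O * S = latticeDual O := by
    have hS : {x | x ∈ traceDual K R ∧ conj x = -x} = (S : Set K) := Set.ext fun x ↦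
      and_congr (SetLike.ext_iff.mp R.restrictScalars_traceDual x) mem_pureImaginary.symm
    rw [← R.restrictScalars_span, ← hS, hpure, R.restrictScalars_traceDual]
  obtain ⟨U, -, hU⟩ := isInvertibleIdeal_iff.mp hGorplus
  rw [Subring.restrictScalars_traceDual] at hU
  have hM := isFullLattice_realCoeffs hz0 hz (isFullLattice_latticeDual hO)
  have hMN := hM.mul_div_eq_of_latticeDual_mul_eq (realCoeffs_div_self hz0 hz hfix' R hTT hT) hU
  obtain ⟨J, hOJ, hTJ⟩ := exists_mul_eq_of_realCoeffs_mul_eq hz0 hz hfix' R inf_le_right hMN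
  exact isInvertibleIdeal_iff.mpr ⟨J, hOJ, by rwa [R.restrictScalars_traceDual, ← hT]⟩

/-- Every convenient order is Gorenstein: if `K` is a CM field with maximal
totally real subfield `Kp`, and `R` is an order of `K` that is stable under complex
conjugation, whose real subring `R⁺ = R ∩ K⁺` is Gorenstein, and whose trace dual is
generated as an `R`-module by its pure imaginary elements, then the trace dual of `R` is an
invertible fractional `R`-ideal. -/
theorem convenient_order_is_Gorenstein
    (Kp K : Type*) [Field Kp] [NumberField Kp] [Field K] [NumberField K] [Algebra Kp K]
    -- `K/Kp` is a CM extension: `Kp` is totally real, `K` is totally imaginary,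
    -- `[K : Kp] = 2`, and `conj` is the nontrivial (involutive) automorphism of `K/Kp`,
    -- whose fixed field is exactly `Kp`.
    (htotreal : ∀ (phi : Kp →+* ℂ) (x : Kp), (phi x).im = 0)
    (htotimag : ∀ phi : K →+* ℂ, ∃ x : K, (phi x).im ≠ 0)
    (hdeg : Module.finrank Kp K = 2)
    (conj : K ≃ₐ[Kp] K)
    (hconj_ne : conj ≠ AlgEquiv.refl)
    (hconj_inv : ∀ x, conj (conj x) = x)
    (hfix : ∀ x : K, conj x = x ↔ x ∈ (algebraMap Kp K).range)
    -- `R` is an order of `K` ...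
    (R : Subring K) (hR : IsOrder K R)
    -- ... stable under complex conjugation ...
    (hstable : ∀ x ∈ R, conj x ∈ R)
    -- ... whose real subring `R⁺ = R ∩ K⁺` is Gorenstein ...
    (hGorplus : IsGorenstein Kp (R.comap (algebraMap Kp K)))
    -- ... and whose trace dual is generated as an `R`-module by its pure imaginary elements.
    (hpure : Submodule.span R {x : K | x ∈ traceDual K R ∧ conj x = -x} = traceDual K R) :
    -- Then the trace dual of `R` is an invertible fractional `R`-ideal.
    IsInvertibleIdeal K R (traceDual K R) :=
  convenient_order_is_Gorenstein_general Kp K conj hconj_ne hconj_inv hfix R hR hGorplus hpure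
end

section
/- Let K be a CM field and let R be an order in K that is stable under complex conjugation and whose real subring R⁺ = R ∩ K⁺ is Gorenstein. If there exist elements α, β ∈ K and invertible fractional R⁺-ideals 𝔄, 𝔅 such that R = 𝔄α ⊕ 𝔅β (an internal direct sum of R⁺-submodules of K), then R is convenient; that is, the trace dual R† of R is generated as an R-module by its pure imaginary elements. -/
open NumberField Polynomial

/-!
Write `1 = a₀α + b₀β` with `a₀ ∈ 𝔄`, `b₀ ∈ 𝔅`, and put `δ = conjDet conj α β = α β̄ - ᾱ β`, a
pure imaginary element which is nonzero because `R` spans `K` and is not fixed by conjugation.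
Every `r = aα + bβ ∈ R` satisfies `r - r̄ = (a b₀ - a₀ b) δ`, so for `t ∈ K⁺` with
`t 𝔄 𝔅 ⊆ (R⁺)†` the pure imaginary element `t / δ` lies in `R†`: indeed
`Tr_{K/K⁺} (r t / δ) = t (a b₀ - a₀ b)`. Conversely every `x ∈ R†` satisfies
`x δ = Tr(xα) β̄ - Tr(xβ) ᾱ` with `Tr(xα) 𝔄 ⊆ (R⁺)†`, and writing `1 = Σ bᵢ kᵢ` with `bᵢ ∈ 𝔅`,
`kᵢ ∈ 𝔅⁻¹` exhibits `Tr(xα) β̄ / δ = Σ (bᵢβ)‾ · Tr(xα) kᵢ / δ` as an `R`-combination of such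
elements; the term in `ᾱ` is symmetric.
-/

theorem algebraMap_trace_eq_add_of_ne_refl {F L : Type*} [Field F] [Field L]
    [Algebra F L] [FiniteDimensional F L] [IsGalois F L] (hdeg : Module.finrank F L = 2)
    {σ : L ≃ₐ[F] L} (hσ : σ ≠ AlgEquiv.refl) (y : L) :
    algebraMap F L (Algebra.trace F L y) = y + σ y := by
  classical
  have h1σ : (1 : Gal(L/F)) ≠ σ := hσ.symm
  have huniv : (Finset.univ : Finset Gal(L/F)) = {1, σ} := by
    refine (Finset.eq_of_subset_of_card_le (Finset.subset_univ _) ?_).symm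
    rw [Finset.card_univ, ← Nat.card_eq_fintype_card, IsGalois.card_aut_eq_finrank, hdeg,
      Finset.card_pair h1σ]
  rw [trace_eq_sum_automorphisms, huniv, Finset.sum_pair h1σ, AlgEquiv.one_apply]

theorem trace_mul_mem_traceDual_comap {F L : Type*} [Field F] [NumberField F] [Field L]
    [NumberField L] [Algebra F L] {R : Subring L} {x γ : L} (hx : x ∈ traceDual L R)
    (hγ : ∀ ρ ∈ R.comap (algebraMap F L), algebraMap F L ρ * γ ∈ R) :
    Algebra.trace F L (x * γ) ∈ traceDual F (R.comap (algebraMap F L)) := by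
  have : Module.Finite F L := Module.Finite.of_restrictScalars_finite ℚ F L
  intro ρ hρ
  obtain ⟨n, hn⟩ := hx _ (hγ ρ hρ)
  refine ⟨n, ?_⟩
  rw [mul_comm, ← smul_eq_mul, ← LinearMap.map_smul, Algebra.trace_trace, Algebra.smul_def,
    ← hn]
  ring_nf

section Decomposition

variable {Kp K : Type*} [Field Kp] [Field K] [Algebra Kp K] {conj : K ≃ₐ[Kp] K}
  {R : Subring K} {A B : Submodule (R.comap (algebraMap Kp K)) Kp} {α β : K}

variable (conj) in
def conjDet (α β : K) : K := α * conj β - conj α * β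

theorem conjDet_swap : conjDet conj β α = -conjDet conj α β := by
  unfold conjDet; ring

theorem conj_conjDet (hconj_inv : ∀ x, conj (conj x) = x) :
    conj (conjDet conj α β) = -conjDet conj α β := by
  simp only [conjDet, map_sub, map_mul, hconj_inv]; ring

theorem sub_conj_eq_mul_conjDet {a₀ b₀ : Kp}
    (h1 : algebraMap Kp K a₀ * α + algebraMap Kp K b₀ * β = 1) (a b : Kp) :
    algebraMap Kp K a * α + algebraMap Kp K b * β
        - conj (algebraMap Kp K a * α + algebraMap Kp K b * β)
      = algebraMap Kp K (a * b₀ - a₀ * b) * conjDet conj α β := by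
  have h1' := congrArg conj h1
  simp only [map_add, map_mul, AlgEquiv.commutes, map_one] at h1'
  simp only [conjDet, map_add, map_mul, map_sub, AlgEquiv.commutes]
  linear_combination (algebraMap Kp K a * conj α + algebraMap Kp K b * conj β) * h1
    - (algebraMap Kp K a * α + algebraMap Kp K b * β) * h1'

variable (R A B α β) in
def IsSumDecomposition : Prop :=
  ∀ x : K, x ∈ R ↔ ∃ a ∈ A, ∃ b ∈ B, x = algebraMap Kp K a * α + algebraMap Kp K b * β

theorem IsSumDecomposition.symm (hsum : IsSumDecomposition R A B α β) :
    IsSumDecomposition R B A β α := by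
  intro x
  rw [hsum]
  constructor <;> rintro ⟨c, hc, c', hc', rfl⟩ <;> exact ⟨c', hc', c, hc, add_comm _ _⟩

theorem conjDet_ne_zero [CharZero K] (hconj : conj ≠ AlgEquiv.refl)
    (hspan : Submodule.span ℚ (R : Set K) = ⊤)
    (hsum : IsSumDecomposition R A B α β)
    {a₀ b₀ : Kp} (h1 : algebraMap Kp K a₀ * α + algebraMap Kp K b₀ * β = 1) :
    conjDet conj α β ≠ 0 := by
  intro hd
  have hfix : Set.EqOn (conj : K →+* K).toRatAlgHom.toLinearMap
      (LinearMap.id : K →ₗ[ℚ] K) R := by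
    intro r hr
    obtain ⟨a, -, b, -, rfl⟩ := (hsum r).1 hr
    have := sub_conj_eq_mul_conjDet (conj := conj) h1 a b
    rw [hd, mul_zero, sub_eq_zero] at this
    exact this.symm
  exact hconj (AlgEquiv.ext (LinearMap.congr_fun (LinearMap.ext_on hspan hfix)))

theorem eq_trace_div_conjDet_add_trace_div_conjDet
    (htrace : ∀ y, algebraMap Kp K (Algebra.trace Kp K y) = y + conj y)
    (hd : conjDet conj α β ≠ 0) (x : K) :
    x = algebraMap Kp K (Algebra.trace Kp K (x * α)) * conj β / conjDet conj α β
      + algebraMap Kp K (Algebra.trace Kp K (x * β)) * conj α / conjDet conj β α := by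
  rw [conjDet_swap (α := α) (β := β), div_neg, ← sub_eq_add_neg, ← sub_div, eq_div_iff hd,
    htrace, htrace]
  simp only [conjDet, map_mul]
  ring

end Decomposition

section NumberField

variable {Kp K : Type*} [Field Kp] [NumberField Kp] [Field K] [NumberField K] [Algebra Kp K]
  {conj : K ≃ₐ[Kp] K} {R : Subring K} {A B : Submodule (R.comap (algebraMap Kp K)) Kp}
  {α β : K}

theorem algebraMap_div_conjDet_mem_traceDual
    (htrace : ∀ y, algebraMap Kp K (Algebra.trace Kp K y) = y + conj y)
    (hconj_inv : ∀ x, conj (conj x) = x)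
    (hsum : IsSumDecomposition R A B α β)
    {a₀ b₀ : Kp} (ha₀ : a₀ ∈ A) (hb₀ : b₀ ∈ B)
    (h1 : algebraMap Kp K a₀ * α + algebraMap Kp K b₀ * β = 1) (hd : conjDet conj α β ≠ 0)
    {t : Kp}
    (ht : ∀ a ∈ A, ∀ b ∈ B, t * (a * b) ∈ traceDual Kp (R.comap (algebraMap Kp K))) :
    algebraMap Kp K t / conjDet conj α β ∈ traceDual K R := by
  have : Module.Finite Kp K := Module.Finite.of_restrictScalars_finite ℚ Kp K
  intro r hr
  obtain ⟨a, ha, b, hb, rfl⟩ := (hsum r).1 hr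
  have htr : Algebra.trace Kp K (algebraMap Kp K t / conjDet conj α β *
      (algebraMap Kp K a * α + algebraMap Kp K b * β)) = t * (a * b₀) - t * (a₀ * b) := by
    apply (algebraMap Kp K).injective
    have hsub := sub_conj_eq_mul_conjDet (conj := conj) h1 a b
    rw [htrace, map_mul, map_div₀, conj_conjDet hconj_inv, AlgEquiv.commutes]
    simp only [map_mul, map_sub] at hsub ⊢
    field_simp
    linear_combination algebraMap Kp K t * hsub
  obtain ⟨n, hn⟩ := sub_mem (ht a ha b₀ hb₀) (ht a₀ ha₀ b hb) 1 (one_mem _)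
  exact ⟨n, by rw [← Algebra.trace_trace (S := Kp), htr, ← hn, mul_one]⟩

theorem trace_mul_mul_mem_traceDual
    (hsum : IsSumDecomposition R A B α β)
    {x : K} (hx : x ∈ traceDual K R) {a : Kp} (ha : a ∈ A) :
    Algebra.trace Kp K (x * α) * a ∈ traceDual Kp (R.comap (algebraMap Kp K)) := by
  have haα : ∀ ρ ∈ R.comap (algebraMap Kp K),
      algebraMap Kp K ρ * (algebraMap Kp K a * α) ∈ R := by
    intro ρ hρ
    refine (hsum _).2 ⟨ρ * a, A.smul_mem ⟨ρ, hρ⟩ ha, 0, zero_mem _, ?_⟩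
    simp only [map_mul, map_zero, zero_mul, add_zero, mul_assoc]
  convert trace_mul_mem_traceDual_comap hx haα using 1
  rw [mul_left_comm, ← Algebra.smul_def, LinearMap.map_smul, smul_eq_mul, mul_comm]

theorem algebraMap_mul_conj_div_conjDet_mem_span
    (htrace : ∀ y, algebraMap Kp K (Algebra.trace Kp K y) = y + conj y)
    (hconj_inv : ∀ x, conj (conj x) = x) (hstable : ∀ x ∈ R, conj x ∈ R)
    (hsum : IsSumDecomposition R A B α β)
    {JB : Submodule (R.comap (algebraMap Kp K)) Kp} (hJB : B * JB = 1)
    {a₀ b₀ : Kp} (ha₀ : a₀ ∈ A) (hb₀ : b₀ ∈ B)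
    (h1 : algebraMap Kp K a₀ * α + algebraMap Kp K b₀ * β = 1) (hd : conjDet conj α β ≠ 0)
    {u : Kp} (hu : ∀ a ∈ A, u * a ∈ traceDual Kp (R.comap (algebraMap Kp K))) :
    algebraMap Kp K u * conj β / conjDet conj α β ∈
      Submodule.span R {x : K | x ∈ traceDual K R ∧ conj x = -x} := by
  suffices ∀ s ∈ B * JB, algebraMap Kp K (u * s) * conj β / conjDet conj α β ∈
      Submodule.span R {x : K | x ∈ traceDual K R ∧ conj x = -x} by
    simpa using this 1 (hJB ▸ Submodule.one_le.1 le_rfl)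
  intro s hs
  refine Submodule.mul_induction_on hs (fun b hb k hk => ?_) (fun s s' hs hs' => ?_)
  · have hgen : algebraMap Kp K (u * k) / conjDet conj α β ∈ traceDual K R := by
      refine algebraMap_div_conjDet_mem_traceDual htrace hconj_inv hsum ha₀ hb₀ h1 hd ?_
      intro a ha b' hb'
      obtain ⟨ρ, hρ⟩ := Submodule.mem_one.1 (hJB ▸ Submodule.mul_mem_mul hb' hk)
      convert Submodule.smul_mem _ ρ (hu a ha) using 1
      rw [Subring.smul_def, smul_eq_mul, show (ρ : Kp) = b' * k from hρ]
      ring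
    have hgen_mem : algebraMap Kp K (u * k) / conjDet conj α β ∈
        Submodule.span R {x : K | x ∈ traceDual K R ∧ conj x = -x} := by
      refine Submodule.subset_span ⟨hgen, ?_⟩
      rw [map_div₀, AlgEquiv.commutes, conj_conjDet hconj_inv, div_neg]
    have hbβ : conj (algebraMap Kp K b * β) ∈ R :=
      hstable _ ((hsum _).2 ⟨0, zero_mem _, b, hb, by simp⟩)
    convert Submodule.smul_mem _ (⟨_, hbβ⟩ : R) hgen_mem using 1
    simp only [Subring.smul_def, smul_eq_mul, map_mul, AlgEquiv.commutes]
    ring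
  · rw [mul_add, map_add, add_mul, add_div]
    exact add_mem hs hs'

end NumberField

theorem order_with_free_real_decomposition_is_convenient_general
    (Kp K : Type*) [Field Kp] [NumberField Kp] [Field K] [NumberField K] [Algebra Kp K]
    (hdeg : Module.finrank Kp K = 2)
    (conj : K ≃ₐ[Kp] K)
    (hconj_ne : conj ≠ AlgEquiv.refl)
    (hconj_inv : ∀ x, conj (conj x) = x)
    (R : Subring K) (hR : IsOrder K R)
    (hstable : ∀ x ∈ R, conj x ∈ R)
    -- `𝔄` and `𝔅` are invertible fractional ideals of `R⁺ = R ∩ Kp`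
    (α β : K) (A B : Submodule (R.comap (algebraMap Kp K)) Kp)
    (hAinv : IsInvertibleIdeal Kp (R.comap (algebraMap Kp K)) A)
    (hBinv : IsInvertibleIdeal Kp (R.comap (algebraMap Kp K)) B)
    -- `R = 𝔄α ⊕ 𝔅β`, an internal direct sum of `R⁺`-submodules of `K`:
    (hsum : ∀ x : K, x ∈ R ↔
      ∃ a ∈ A, ∃ b ∈ B, x = algebraMap Kp K a * α + algebraMap Kp K b * β) :
    -- Then `R` is convenient: its trace dual is generated by its pure imaginary elements.
    Submodule.span R {x : K | x ∈ traceDual K R ∧ conj x = -x} = traceDual K R := by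
  have : Algebra.IsQuadraticExtension Kp K := ⟨hdeg⟩
  have htrace := algebraMap_trace_eq_add_of_ne_refl hdeg hconj_ne
  obtain ⟨JA, hJA⟩ := hAinv
  obtain ⟨JB, hJB⟩ := hBinv
  obtain ⟨a₀, ha₀, b₀, hb₀, h1⟩ := (hsum 1).1 R.one_mem
  have hd : conjDet conj α β ≠ 0 := conjDet_ne_zero hconj_ne hR.2 hsum h1.symm
  have hd' : conjDet conj β α ≠ 0 := by rwa [conjDet_swap, neg_ne_zero]
  have hsum' : IsSumDecomposition R B A β α := IsSumDecomposition.symm hsum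
  refine le_antisymm (Submodule.span_le.2 fun x hx => hx.1) fun x hx => ?_
  rw [eq_trace_div_conjDet_add_trace_div_conjDet htrace hd x]
  exact add_mem
    (algebraMap_mul_conj_div_conjDet_mem_span htrace hconj_inv hstable hsum hJB ha₀ hb₀
      h1.symm hd fun a ha => trace_mul_mul_mem_traceDual hsum hx ha)
    (algebraMap_mul_conj_div_conjDet_mem_span htrace hconj_inv hstable hsum' hJA hb₀ ha₀
      (by rw [add_comm, ← h1]) hd' fun b hb => trace_mul_mul_mem_traceDual hsum' hx hb)

/-- Let `K` be a CM field and `R` an order of `K` stable under complex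
conjugation whose real subring `R⁺ = R ∩ Kp` is Gorenstein. If `R = 𝔄α ⊕ 𝔅β` for elements
`α, β ∈ K` and invertible fractional `R⁺`-ideals `𝔄, 𝔅`, then `R` is convenient: its trace
dual is generated as an `R`-module by its pure imaginary elements. -/
theorem order_with_free_real_decomposition_is_convenient
    (Kp K : Type*) [Field Kp] [NumberField Kp] [Field K] [NumberField K] [Algebra Kp K]
    (htotreal : ∀ (phi : Kp →+* ℂ) (x : Kp), (phi x).im = 0)
    (htotimag : ∀ phi : K →+* ℂ, ∃ x : K, (phi x).im ≠ 0)
    (hdeg : Module.finrank Kp K = 2)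
    (conj : K ≃ₐ[Kp] K)
    (hconj_ne : conj ≠ AlgEquiv.refl)
    (hconj_inv : ∀ x, conj (conj x) = x)
    (hfix : ∀ x : K, conj x = x ↔ x ∈ (algebraMap Kp K).range)
    (R : Subring K) (hR : IsOrder K R)
    (hstable : ∀ x ∈ R, conj x ∈ R)
    -- the real subring `R⁺ = R ∩ Kp` is Gorenstein
    (hGorplus : IsGorenstein Kp (R.comap (algebraMap Kp K)))
    -- `𝔄` and `𝔅` are invertible fractional ideals of `R⁺ = R ∩ Kp`
    (α β : K) (A B : Submodule (R.comap (algebraMap Kp K)) Kp)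
    (hAfrac : IsFracIdeal Kp (R.comap (algebraMap Kp K)) A)
    (hAinv : IsInvertibleIdeal Kp (R.comap (algebraMap Kp K)) A)
    (hBfrac : IsFracIdeal Kp (R.comap (algebraMap Kp K)) B)
    (hBinv : IsInvertibleIdeal Kp (R.comap (algebraMap Kp K)) B)
    -- `R = 𝔄α ⊕ 𝔅β`, an internal direct sum of `R⁺`-submodules of `K`:
    (hsum : ∀ x : K, x ∈ R ↔
      ∃ a ∈ A, ∃ b ∈ B, x = algebraMap Kp K a * α + algebraMap Kp K b * β)
    (hdirect : ∀ a ∈ A, ∀ b ∈ B,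
      algebraMap Kp K a * α + algebraMap Kp K b * β = 0 → a = 0 ∧ b = 0) :
    -- Then `R` is convenient: its trace dual is generated by its pure imaginary elements.
    Submodule.span R {x : K | x ∈ traceDual K R ∧ conj x = -x} = traceDual K R :=
  order_with_free_real_decomposition_is_convenient_general Kp K hdeg conj hconj_ne hconj_inv R hR
    hstable α β A B hAinv hBinv hsum
end

section
/- Let L/K be a quadratic extension of number fields with nontrivial automorphism σ, let S be an order of L with σ(S) = S, and let R = S ∩ K. Then for every invertible fractional S-ideal 𝔅 there is a unique invertible fractional R-ideal 𝔄 such that the S-submodule of L generated by 𝔄 equals 𝔅·σ(𝔅). -/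
open NumberField Polynomial

/-!
The norm of `𝔅` is the `R`-span `N(𝔅)` of the norms `b σ(b)`, `b ∈ 𝔅`; its extension to `S` is
spanned by these products and so lies in `𝔅 σ(𝔅)`. If `𝔅 𝔆 = S`, then `N(𝔅) N(𝔆) ⊆ R`, and
expanding `1 = N(∑ bᵢ cᵢ)` writes `1` as a sum of elements of `N(𝔅) N(𝔆)` and of polar terms
`Tr(bᵢ cᵢ σ(bⱼ cⱼ))` whose squares lie in `N(𝔅) N(𝔆)`. So `1` is nilpotent modulo this ideal of
`R`, which is therefore `R`. Hence `N(𝔅)` is invertible, its extension `N(𝔅) S` is invertible and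
contained in `𝔅 σ(𝔅)`, which has inverse `𝔆 σ(𝔆)`, forcing equality. Uniqueness holds because
extension to `S` is injective on invertible ideals: if `𝔄' S ⊆ 𝔄 S`, then `𝔄' 𝔄⁻¹ ⊆ S ∩ K = R`,
so `𝔄' ⊆ 𝔄`.
-/

open Submodule

section SpanImage

variable {A B F : Type*} [CommRing A] [CommRing B] [FunLike F A B] [RingHomClass F A B]
  {R : Subring A} {T : Subring B} {f : F}

theorem span_image_span (hf : Set.MapsTo f R T) (X : Set A) :
    span T (f '' span R X) = span T (f '' X) := by
  refine le_antisymm (span_le.2 ?_) (span_mono (Set.image_mono subset_span))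
  rintro _ ⟨x, hx, rfl⟩
  induction hx using span_induction with
  | mem x hx => exact subset_span ⟨x, hx, rfl⟩
  | zero => simp
  | add a b _ _ ha hb => rw [map_add]; exact add_mem ha hb
  | smul r a _ ha => simpa [Subring.smul_def] using smul_mem _ (⟨f r, hf r.2⟩ : T) ha

theorem span_image_mul (hf : Set.MapsTo f R T) (M N : Submodule R A) :
    span T (f '' ↑(M * N)) = span T (f '' M) * span T (f '' N) := by
  rw [mul_eq_span_mul_set, span_image_span hf, Set.image_mul, span_mul_span]

theorem span_image_one (hf : Set.MapsTo f R T) : span T (f '' ↑(1 : Submodule R A)) = 1 := by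
  rw [one_eq_span, span_image_span hf, Set.image_singleton, map_one, ← one_eq_span]

end SpanImage

theorem Subring.mem_one_submodule_iff {A : Type*} [CommRing A] {S : Subring A} {x : A} :
    x ∈ (1 : Submodule S A) ↔ x ∈ S := by
  rw [Submodule.mem_one]
  exact ⟨fun ⟨y, hy⟩ ↦ hy ▸ y.2, fun hx ↦ ⟨⟨x, hx⟩, rfl⟩⟩

theorem le_of_span_image_le {A B : Type*} [CommRing A] [CommRing B] {T : Subring B} (f : A →+* B)
    {I I' J : Submodule (T.comap f) A} (hIJ : I * J = 1)
    (h : span T (f '' I') ≤ span T (f '' I)) : I' ≤ I := by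
  have hf : Set.MapsTo f (T.comap f) T := fun _ h ↦ h
  intro a ha
  have haJ : ∀ j ∈ J, a * j ∈ T.comap f := fun j hj ↦ by
    have := mul_mem_mul (h (subset_span ⟨a, ha, rfl⟩))
      (subset_span ⟨j, hj, rfl⟩ : f j ∈ span T (f '' J))
    rw [← span_image_mul hf, hIJ, span_image_one hf, Subring.mem_one_submodule_iff] at this
    rwa [Subring.mem_comap, map_mul]
  have h1 : (1 : A) ∈ I * J := hIJ ▸ one_le.1 le_rfl
  simpa using Submodule.mul_induction_on (C := fun x ↦ a * x ∈ I) h1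
    (fun i hi j hj ↦ by
      simpa [Subring.smul_def, mul_left_comm, mul_comm] using I.smul_mem ⟨_, haJ j hj⟩ hi)
    (fun x y hx hy ↦ by simpa [mul_add] using add_mem hx hy)

section Quadratic

variable {K L : Type*} [Field K] [Field L] [Algebra K L] {σ : L ≃ₐ[K] L}

theorem AlgEquiv.eq_one_or_eq_of_finrank_eq_two (hdeg : Module.finrank K L = 2) (hσ : σ ≠ 1)
    (τ : L ≃ₐ[K] L) : τ = 1 ∨ τ = σ := by
  classical
  have := Module.finite_of_finrank_eq_succ hdeg
  by_contra! h
  have h3 : ({1, σ, τ} : Finset (L ≃ₐ[K] L)).card = 3 :=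
    Finset.card_eq_three.2 ⟨1, σ, τ, hσ.symm, h.1.symm, h.2.symm, rfl⟩
  have := (Finset.card_le_univ {1, σ, τ}).trans (AlgEquiv.card_le (F := K) (K := L))
  omega

theorem algebraMap_norm_eq_mul_of_finrank_eq_two (hdeg : Module.finrank K L = 2) (hσ : σ ≠ 1)
    (x : L) : algebraMap K L (Algebra.norm K x) = x * σ x := by
  classical
  have := Module.finite_of_finrank_eq_succ hdeg
  have huniv : {1, σ} = (Finset.univ : Finset (L ≃ₐ[K] L)) := Finset.eq_univ_of_forall fun τ ↦ by
    simpa using AlgEquiv.eq_one_or_eq_of_finrank_eq_two hdeg hσ τ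
  have : IsGalois K L := IsGalois.of_card_aut_eq_finrank K L <| by
    rw [Nat.card_eq_fintype_card, ← Finset.card_univ, ← huniv, Finset.card_pair hσ.symm, hdeg]
  rw [Algebra.norm_eq_prod_automorphisms, ← huniv, Finset.prod_pair hσ.symm]
  rfl

end Quadratic

theorem eq_of_mul_eq_one_of_le {α : Type*} [CommMonoid α] [PartialOrder α] [MulLeftMono α]
    {x y m n : α} (hxy : x * y = 1) (hmn : m * n = 1) (hm : m ≤ x) (hn : n ≤ y) : x = m := by
  refine le_antisymm ?_ hm
  calc x = x * n * m := by rw [mul_assoc, mul_comm n, hmn, mul_one]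
    _ ≤ x * y * m := by gcongr
    _ = m := by rw [hxy, one_mul]

namespace Submodule

variable {R A : Type*} [CommRing R] [CommRing A] [Algebra R A] {I : Submodule R A}

def comapRadical (I : Submodule R A) : Submodule R A :=
  Submodule.map (Algebra.linearMap R A) (Ideal.radical (I.comap (Algebra.linearMap R A)))

theorem algebraMap_mem_comapRadical {r : R} {n : ℕ} (h : algebraMap R A r ^ n ∈ I) :
    algebraMap R A r ∈ I.comapRadical :=
  mem_map_of_mem ⟨n, by simpa using h⟩

theorem le_comapRadical (hI : I ≤ 1) : I ≤ I.comapRadical := fun x hx ↦ by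
  obtain ⟨r, rfl⟩ := mem_one.1 (hI hx)
  exact algebraMap_mem_comapRadical (n := 1) (by simpa using hx)

theorem one_mem_of_one_mem_comapRadical (h : 1 ∈ I.comapRadical) : 1 ∈ I := by
  obtain ⟨r, ⟨n, hn⟩, hr⟩ := mem_map.1 h
  simpa [show algebraMap R A r = 1 from hr] using hn

end Submodule

noncomputable def normIdeal (K : Type*) {L : Type*} [Field K] [Field L] [Algebra K L]
    (S : Subring L) (B : Submodule S L) : Submodule (S.comap (algebraMap K L)) K :=
  span _ (Algebra.norm K '' (B : Set L))

section NormIdeal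

open QuadraticMap (polar)

variable {K L : Type*} [Field K] [Field L] [Algebra K L] {σ : L ≃ₐ[K] L} {S : Subring L}
  {B C : Submodule S L}

theorem norm_mem_comap (hN : ∀ x, algebraMap K L (Algebra.norm K x) = x * σ x)
    (hσS : Set.MapsTo σ S S) {x : L} (hx : x ∈ S) :
    Algebra.norm K x ∈ S.comap (algebraMap K L) := by
  rw [Subring.mem_comap, hN]
  exact S.mul_mem hx (hσS hx)

theorem polar_norm_mem_comap (hN : ∀ x, algebraMap K L (Algebra.norm K x) = x * σ x)
    (hσS : Set.MapsTo σ S S) {x y : L} (hx : x ∈ S) (hy : y ∈ S) :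
    polar (Algebra.norm K) x y ∈ S.comap (algebraMap K L) :=
  sub_mem (sub_mem (norm_mem_comap hN hσS (add_mem hx hy)) (norm_mem_comap hN hσS hx))
    (norm_mem_comap hN hσS hy)

theorem algebraMap_polar_norm (hN : ∀ x, algebraMap K L (Algebra.norm K x) = x * σ x)
    (x y : L) : algebraMap K L (polar (Algebra.norm K) x y) = x * σ y + y * σ x := by
  simp only [QuadraticMap.polar, map_sub, hN, map_add]
  ring

theorem polar_norm_add_left (hN : ∀ x, algebraMap K L (Algebra.norm K x) = x * σ x)
    (x x' y : L) :
    polar (Algebra.norm K) (x + x') y = polar (Algebra.norm K) x y + polar (Algebra.norm K) x' y :=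
  (algebraMap K L).injective <| by
    simp only [map_add, algebraMap_polar_norm hN]
    ring

theorem polar_norm_add_right (hN : ∀ x, algebraMap K L (Algebra.norm K x) = x * σ x)
    (x y y' : L) :
    polar (Algebra.norm K) x (y + y') =
      polar (Algebra.norm K) x y + polar (Algebra.norm K) x y' := by
  simp only [QuadraticMap.polar_comm _ x, polar_norm_add_left hN]

theorem norm_mem_normIdeal {b : L} (hb : b ∈ B) : Algebra.norm K b ∈ normIdeal K S B :=
  subset_span ⟨b, hb, rfl⟩

theorem polar_norm_mem_normIdeal {b b' : L} (hb : b ∈ B) (hb' : b' ∈ B) :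
    polar (Algebra.norm K) b b' ∈ normIdeal K S B :=
  sub_mem (sub_mem (norm_mem_normIdeal (add_mem hb hb')) (norm_mem_normIdeal hb))
    (norm_mem_normIdeal hb')

theorem mul_mem_of_mul_le_one (hBC : B * C ≤ 1) {b c : L} (hb : b ∈ B) (hc : c ∈ C) :
    b * c ∈ S :=
  Subring.mem_one_submodule_iff.1 (hBC (mul_mem_mul hb hc))

theorem normIdeal_mul_le_one (hN : ∀ x, algebraMap K L (Algebra.norm K x) = x * σ x)
    (hσS : Set.MapsTo σ S S) (hBC : B * C ≤ 1) : normIdeal K S B * normIdeal K S C ≤ 1 := by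
  rw [normIdeal, normIdeal, span_mul_span, span_le]
  rintro _ ⟨_, ⟨b, hb, rfl⟩, _, ⟨c, hc, rfl⟩, rfl⟩
  show Algebra.norm K b * Algebra.norm K c ∈ (1 : Submodule _ K)
  rw [← map_mul]
  exact Subring.mem_one_submodule_iff.2
    (norm_mem_comap hN hσS (mul_mem_of_mul_le_one hBC hb hc))

theorem sq_polar_norm_mul_mem (hN : ∀ x, algebraMap K L (Algebra.norm K x) = x * σ x)
    (hσS : Set.MapsTo σ S S) (hBC : B * C ≤ 1) {b b' c c' : L} (hb : b ∈ B) (hb' : b' ∈ B)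
    (hc : c ∈ C) (hc' : c' ∈ C) :
    polar (Algebra.norm K) (b * c) (b' * c') ^ 2 ∈ normIdeal K S B * normIdeal K S C := by
  set I := normIdeal K S B * normIdeal K S C
  have hII : ∀ x ∈ I, ∀ y ∈ I, x * y ∈ I := fun x hx y hy ↦
    (mul_le_mul_left (normIdeal_mul_le_one hN hσS hBC) I).trans (one_mul I).le
      (mul_mem_mul hx hy)
  set p := polar (Algebra.norm K) (b * c) (b' * c')
  set s := polar (Algebra.norm K) b b'
  set t := polar (Algebra.norm K) c c'
  have hp : p ∈ S.comap (algebraMap K L) := polar_norm_mem_comap hN hσS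
    (mul_mem_of_mul_le_one hBC hb hc) (mul_mem_of_mul_le_one hBC hb' hc')
  -- `s * t = p + q` with `q` the polar form of the norm at `(b * c', b' * c)`, and `p * q`
  -- expands into norms
  have key : p ^ 2 = p * (s * t) - ((s * Algebra.norm K c) * (s * Algebra.norm K c') +
      (Algebra.norm K b * t) * (Algebra.norm K b' * t) -
      4 * ((Algebra.norm K b * Algebra.norm K c) * (Algebra.norm K b' * Algebra.norm K c'))) :=
    (algebraMap K L).injective <| by
      simp only [map_pow, map_mul, map_sub, map_add, map_ofNat, algebraMap_polar_norm hN, hN,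
        p, s, t]
      ring
  have hs := polar_norm_mem_normIdeal (K := K) hb hb'
  have ht := polar_norm_mem_normIdeal (K := K) hc hc'
  rw [key]
  refine sub_mem ?_ (sub_mem (add_mem ?_ ?_) ?_)
  · simpa [Subring.smul_def] using I.smul_mem ⟨p, hp⟩ (mul_mem_mul hs ht)
  · exact hII _ (mul_mem_mul hs (norm_mem_normIdeal hc)) _ (mul_mem_mul hs (norm_mem_normIdeal hc'))
  · exact hII _ (mul_mem_mul (norm_mem_normIdeal hb) ht) _ (mul_mem_mul (norm_mem_normIdeal hb') ht)
  · simpa using nsmul_mem (hII _ (mul_mem_mul (norm_mem_normIdeal hb) (norm_mem_normIdeal hc)) _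
      (mul_mem_mul (norm_mem_normIdeal hb') (norm_mem_normIdeal hc'))) 4

theorem one_mem_normIdeal_mul (hN : ∀ x, algebraMap K L (Algebra.norm K x) = x * σ x)
    (hσS : Set.MapsTo σ S S) (hBC : B * C = 1) : 1 ∈ normIdeal K S B * normIdeal K S C := by
  set I := normIdeal K S B * normIdeal K S C
  have hI : I ≤ 1 := normIdeal_mul_le_one hN hσS hBC.le
  have hS : ∀ {b c}, b ∈ B → c ∈ C → b * c ∈ S := mul_mem_of_mul_le_one hBC.le
  have hpolar : ∀ x ∈ B * C, ∀ y ∈ B * C, polar (Algebra.norm K) x y ∈ I.comapRadical := by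
    intro x hx y hy
    refine Submodule.mul_induction_on hx (fun b hb c hc ↦ ?_) fun x x' h h' ↦ ?_
    · refine Submodule.mul_induction_on hy (fun b' hb' c' hc' ↦ ?_) fun y y' h h' ↦ ?_
      · have hp := polar_norm_mem_comap hN hσS (hS hb hc) (hS hb' hc')
        exact algebraMap_mem_comapRadical (r := (⟨_, hp⟩ : S.comap (algebraMap K L)))
          (sq_polar_norm_mul_mem hN hσS hBC.le hb hb' hc hc')
      · rw [polar_norm_add_right hN]
        exact add_mem h h'
    · rw [polar_norm_add_left hN]
      exact add_mem h h'
  have hnorm : ∀ x ∈ B * C, Algebra.norm K x ∈ I.comapRadical := by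
    intro x hx
    induction hx using Submodule.mul_induction_on' with
    | mem_mul_mem b hb c hc =>
      rw [map_mul]
      exact le_comapRadical hI (mul_mem_mul (norm_mem_normIdeal hb) (norm_mem_normIdeal hc))
    | add x hx y hy hx' hy' =>
      have : Algebra.norm K (x + y) =
          Algebra.norm K x + Algebra.norm K y + polar (Algebra.norm K) x y := by
        rw [QuadraticMap.polar]; ring
      rw [this]
      exact add_mem (add_mem hx' hy') (hpolar x hx y hy)
  have h1 : (1 : L) ∈ B * C := hBC ▸ one_le.1 le_rfl
  exact one_mem_of_one_mem_comapRadical (map_one (Algebra.norm K (S := L)) ▸ hnorm 1 h1)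

theorem normIdeal_mul_eq_one (hN : ∀ x, algebraMap K L (Algebra.norm K x) = x * σ x)
    (hσS : Set.MapsTo σ S S) (hBC : B * C = 1) : normIdeal K S B * normIdeal K S C = 1 :=
  (normIdeal_mul_le_one hN hσS hBC.le).antisymm (one_le.2 (one_mem_normIdeal_mul hN hσS hBC))

theorem span_image_normIdeal (hN : ∀ x, algebraMap K L (Algebra.norm K x) = x * σ x) :
    span S (algebraMap K L '' normIdeal K S B) = span S ((fun b ↦ b * σ b) '' B) := by
  rw [normIdeal, span_image_span (fun _ h ↦ h), Set.image_image]
  simp only [hN]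

theorem mul_span_image_eq_span_image_normIdeal
    (hN : ∀ x, algebraMap K L (Algebra.norm K x) = x * σ x) (hσS : Set.MapsTo σ S S)
    (hBC : B * C = 1) :
    B * span S (σ '' B) = span S (algebraMap K L '' normIdeal K S B) := by
  have hconj : ∀ D : Submodule S L, span S ((fun d ↦ d * σ d) '' D) ≤ D * span S (σ '' D) :=
    fun D ↦ span_le.2 fun _ ⟨d, hd, h⟩ ↦ h ▸ mul_mem_mul hd (subset_span ⟨d, hd, rfl⟩)
  refine eq_of_mul_eq_one_of_le (y := C * span S (σ '' C))
    (n := span S (algebraMap K L '' normIdeal K S C)) ?_ ?_ ?_ ?_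
  · rw [mul_mul_mul_comm, ← span_image_mul hσS, hBC, span_image_one hσS, one_mul]
  · rw [← span_image_mul (fun _ h ↦ h), normIdeal_mul_eq_one hN hσS hBC,
      span_image_one (fun _ h ↦ h)]
  · rw [span_image_normIdeal hN]
    exact hconj B
  · rw [span_image_normIdeal hN]
    exact hconj C

theorem normIdeal_ne_bot (hN : ∀ x, algebraMap K L (Algebra.norm K x) = x * σ x) (hB : B ≠ ⊥) :
    normIdeal K S B ≠ ⊥ := by
  obtain ⟨b, hb, hb0⟩ := (Submodule.ne_bot_iff B).1 hB
  refine (Submodule.ne_bot_iff _).2 ⟨_, norm_mem_normIdeal hb, fun h ↦ ?_⟩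
  have := hN b
  rw [h, map_zero] at this
  exact mul_ne_zero hb0 ((map_ne_zero σ).2 hb0) this.symm

end NormIdeal

theorem norm_of_invertible_ideal_exists_unique_general
    (Kf L : Type*) [Field Kf] [Field L] [Algebra Kf L]
    (hdeg : Module.finrank Kf L = 2)
    (σ : L ≃ₐ[Kf] L) (hσ : σ ≠ AlgEquiv.refl)
    (S : Subring L)
    (hσS : ∀ x : L, x ∈ S ↔ σ x ∈ S)
    (B : Submodule S L)
    (hBfrac : IsFracIdeal L S B) (hBinv : IsInvertibleIdeal L S B) :
    ∃! A : Submodule (S.comap (algebraMap Kf L)) Kf,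
      (IsFracIdeal Kf (S.comap (algebraMap Kf L)) A ∧
        IsInvertibleIdeal Kf (S.comap (algebraMap Kf L)) A) ∧
      Submodule.span S (algebraMap Kf L '' (A : Set Kf))
        = B * Submodule.span S ((⇑σ) '' (B : Set L)) := by
  obtain ⟨C, hBC⟩ := hBinv
  have hN := algebraMap_norm_eq_mul_of_finrank_eq_two hdeg hσ
  have hσS' : Set.MapsTo σ S S := fun x ↦ (hσS x).1
  have hNBC := normIdeal_mul_eq_one hN hσS' hBC
  refine ⟨normIdeal Kf S B, ⟨⟨⟨normIdeal_ne_bot hN hBfrac.1, fg_of_isUnit (.of_mul_eq_one _ hNBC)⟩,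
    _, hNBC⟩, (mul_span_image_eq_span_image_normIdeal hN hσS' hBC).symm⟩, ?_⟩
  rintro A ⟨⟨-, J, hAJ⟩, hA⟩
  rw [mul_span_image_eq_span_image_normIdeal hN hσS' hBC] at hA
  exact (le_of_span_image_le _ hNBC hA.le).antisymm (le_of_span_image_le _ hAJ hA.ge)

/-- Let `L/Kf` be a quadratic extension of number fields with nontrivial
automorphism `σ`, let `S` be an order of `L` with `σ(S) = S`, and let `R = S ∩ Kf`. Then for
every invertible fractional `S`-ideal `B` there is a unique invertible fractional `R`-ideal
`A` such that the `S`-submodule of `L` generated by `A` equals `B·σ(B)`. -/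
theorem norm_of_invertible_ideal_exists_unique
    (Kf L : Type*) [Field Kf] [NumberField Kf] [Field L] [NumberField L] [Algebra Kf L]
    (hdeg : Module.finrank Kf L = 2)
    (σ : L ≃ₐ[Kf] L) (hσ : σ ≠ AlgEquiv.refl)
    (S : Subring L) (hS : IsOrder L S)
    (hσS : ∀ x : L, x ∈ S ↔ σ x ∈ S)
    (B : Submodule S L)
    (hBfrac : IsFracIdeal L S B) (hBinv : IsInvertibleIdeal L S B) :
    ∃! A : Submodule (S.comap (algebraMap Kf L)) Kf,
      (IsFracIdeal Kf (S.comap (algebraMap Kf L)) A ∧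
        IsInvertibleIdeal Kf (S.comap (algebraMap Kf L)) A) ∧
      Submodule.span S (algebraMap Kf L '' (A : Set Kf))
        = B * Submodule.span S ((⇑σ) '' (B : Set L)) :=
  norm_of_invertible_ideal_exists_unique_general Kf L hdeg σ hσ S hσS B hBfrac hBinv
end

section
/- Let K be a CM field with maximal totally real subfield K⁺, let q be a positive integer, and let π be an algebraic integer with K = K⁺(π), π ∉ K⁺, and π·π̄ = q. Let B be a Gorenstein order in K⁺ that contains π + π̄. Then the ring R = B[π] is a convenient order in K with real subring R⁺ = R ∩ K⁺ = B; in particular R is stable under complex conjugation and its trace dual is generated as an R-module by its pure imaginary elements. -/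
open NumberField Polynomial

/-!
Put `t = π + π̄ ∈ B` and `δ = π - π̄ ≠ 0`. From `π² = tπ - q` one gets `R = B[π] = B + Bπ`, which
gives the order property, stability under conjugation and `R ∩ K⁺ = B`. Since
`Tr_{K/K⁺} y = y + ȳ`, an element `y` lies in `R†` iff `Tr y` and `Tr (yπ)` lie in `B†`. For
`w ∈ B†` the element `w / δ` is pure imaginary with traces `0` and `w`, hence lies in `R†`; and
every `y ∈ K` satisfies `δ y = (Tr (yπ) - t Tr y) + (Tr y) π`, which writes `y ∈ R†` as an
`R`-combination of two such elements.
-/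

section QuadraticExtension

variable {F L : Type*} [Field F] [Field L] [Algebra F L]

theorem algebraMap_trace_eq_add_of_finrank_eq_two [CharZero F] (hdeg : Module.finrank F L = 2)
    (σ : L ≃ₐ[F] L) (hσ : ∀ x, σ (σ x) = x) (hfix : ∀ x, σ x = x → x ∈ (algebraMap F L).range)
    (x : L) : algebraMap F L (Algebra.trace F L x) = x + σ x := by
  obtain ⟨a, ha⟩ := hfix (x + σ x) (by rw [map_add, hσ, add_comm])
  have h2 : (2 : F) * Algebra.trace F L x = 2 * a :=
    calc (2 : F) * Algebra.trace F L x = Algebra.trace F L x + Algebra.trace F L (σ x) := by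
          rw [Algebra.trace_eq_of_algEquiv]; ring
      _ = Algebra.trace F L (algebraMap F L a) := by rw [ha, map_add]
      _ = 2 * a := by rw [Algebra.trace_algebraMap, hdeg, nsmul_eq_mul, Nat.cast_ofNat]
  rw [mul_left_cancel₀ two_ne_zero h2, ha]

theorem span_one_pair_eq_top_of_finrank_eq_two (hdeg : Module.finrank F L = 2) {π : L}
    (hπ : π ∉ (algebraMap F L).range) : Submodule.span F {1, π} = ⊤ := by
  have : FiniteDimensional F L := Module.finite_of_finrank_pos (by omega)
  have hli : LinearIndependent F ![1, π] := (LinearIndependent.pair_iff' one_ne_zero).2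
    fun a h => hπ ⟨a, by rw [← h, Algebra.smul_def, mul_one]⟩
  simpa [Matrix.range_cons, Set.pair_comm π 1] using
    hli.span_eq_top_of_card_eq_finrank' (by simp [hdeg])

end QuadraticExtension

section AdjoinElement

variable {A S : Type*} [CommRing A] [CommRing S] [Algebra A S]

def adjoinElement (B : Subring A) (x : S) : Subring S :=
  Subring.closure (algebraMap A S '' B ∪ {x})

variable {B : Subring A} {x : S} {t n : A}

theorem mem_adjoinElement_iff (ht : t ∈ B) (hn : n ∈ B)
    (hx : x ^ 2 = algebraMap A S t * x - algebraMap A S n) {y : S} :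
    y ∈ adjoinElement B x ↔ ∃ a ∈ B, ∃ b ∈ B, y = algebraMap A S a + algebraMap A S b * x := by
  constructor
  · intro hy
    induction hy using Subring.closure_induction with
    | mem y hy =>
      rcases hy with ⟨a, ha, rfl⟩ | rfl
      · exact ⟨a, ha, 0, B.zero_mem, by simp⟩
      · exact ⟨0, B.zero_mem, 1, B.one_mem, by simp⟩
    | zero => exact ⟨0, B.zero_mem, 0, B.zero_mem, by simp⟩
    | one => exact ⟨1, B.one_mem, 0, B.zero_mem, by simp⟩
    | add _ _ _ _ ih₁ ih₂ =>
      obtain ⟨a₁, ha₁, b₁, hb₁, rfl⟩ := ih₁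
      obtain ⟨a₂, ha₂, b₂, hb₂, rfl⟩ := ih₂
      exact ⟨a₁ + a₂, add_mem ha₁ ha₂, b₁ + b₂, add_mem hb₁ hb₂, by simp only [map_add]; ring⟩
    | neg _ _ ih =>
      obtain ⟨a, ha, b, hb, rfl⟩ := ih
      exact ⟨-a, neg_mem ha, -b, neg_mem hb, by simp only [map_neg]; ring⟩
    | mul _ _ _ _ ih₁ ih₂ =>
      obtain ⟨a₁, ha₁, b₁, hb₁, rfl⟩ := ih₁
      obtain ⟨a₂, ha₂, b₂, hb₂, rfl⟩ := ih₂
      refine ⟨a₁ * a₂ - b₁ * b₂ * n, sub_mem (mul_mem ha₁ ha₂) (mul_mem (mul_mem hb₁ hb₂) hn),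
        a₁ * b₂ + b₁ * a₂ + b₁ * b₂ * t,
        add_mem (add_mem (mul_mem ha₁ hb₂) (mul_mem hb₁ ha₂)) (mul_mem (mul_mem hb₁ hb₂) ht), ?_⟩
      simp only [map_add, map_sub, map_mul]
      linear_combination algebraMap A S b₁ * algebraMap A S b₂ * hx
  · rintro ⟨a, ha, b, hb, rfl⟩
    have hB : ∀ c ∈ B, algebraMap A S c ∈ adjoinElement B x :=
      fun c hc => Subring.subset_closure (Or.inl ⟨c, hc, rfl⟩)
    exact add_mem (hB a ha) (mul_mem (hB b hb) (Subring.subset_closure (Or.inr rfl)))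

theorem module_finite_int_adjoinElement [Module.Finite ℤ B] (ht : t ∈ B) (hn : n ∈ B)
    (hx : x ^ 2 = algebraMap A S t * x - algebraMap A S n) :
    Module.Finite ℤ (adjoinElement B x) := by
  let f : B × B →ₗ[ℤ] adjoinElement B x :=
    { toFun := fun p => ⟨algebraMap A S p.1 + algebraMap A S p.2 * x,
        (mem_adjoinElement_iff ht hn hx).2 ⟨p.1, p.1.2, p.2, p.2.2, rfl⟩⟩
      map_add' := fun p p' => by ext; simp [add_mul, add_add_add_comm]
      map_smul' := fun k p => by ext; simp [mul_add, mul_assoc] }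
  refine Module.Finite.of_surjective f ?_
  rintro ⟨y, hy⟩
  obtain ⟨a, ha, b, hb, rfl⟩ := (mem_adjoinElement_iff ht hn hx).1 hy
  exact ⟨(⟨a, ha⟩, ⟨b, hb⟩), rfl⟩

end AdjoinElement

section AdjoinOverField

variable {F L : Type*} [Field F] [Field L] [Algebra F L] {σ : L ≃ₐ[F] L} {B : Subring F} {π : L}
  {t n : F}

theorem span_rat_adjoinElement_eq_top [CharZero F] [CharZero L]
    (hB : Submodule.span ℚ (B : Set F) = ⊤) (hπ : Submodule.span F {1, π} = ⊤) :
    Submodule.span ℚ (adjoinElement B π : Set L) = ⊤ := by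
  have hlin : ∀ f : F →ₗ[ℚ] L, (∀ b ∈ B, f b ∈ adjoinElement B π) →
      ∀ c, f c ∈ Submodule.span ℚ (adjoinElement B π : Set L) := by
    intro f hf c
    refine Submodule.span_mono ?_ (Submodule.apply_mem_span_image_of_mem_span f
      (hB ▸ Submodule.mem_top : c ∈ Submodule.span ℚ (B : Set F)))
    rintro _ ⟨b, hb, rfl⟩
    exact hf b hb
  have hBR : ∀ b ∈ B, algebraMap F L b ∈ adjoinElement B π :=
    fun b hb => Subring.subset_closure (Or.inl ⟨b, hb, rfl⟩)
  have hπR : π ∈ adjoinElement B π := Subring.subset_closure (Or.inr rfl)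
  rw [eq_top_iff]
  rintro y -
  obtain ⟨c, d, rfl⟩ :=
    Submodule.mem_span_pair.1 (hπ ▸ Submodule.mem_top : y ∈ Submodule.span F {1, π})
  rw [Algebra.smul_def, Algebra.smul_def, mul_one]
  exact add_mem (hlin (IsScalarTower.toAlgHom ℚ F L).toLinearMap hBR c)
    (hlin (LinearMap.mulRight ℚ π ∘ₗ (IsScalarTower.toAlgHom ℚ F L).toLinearMap)
      (fun b hb => mul_mem (hBR b hb) hπR) d)

theorem comap_adjoinElement (ht : t ∈ B) (hn : n ∈ B)
    (hx : π ^ 2 = algebraMap F L t * π - algebraMap F L n) (hπ : π ∉ (algebraMap F L).range) :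
    (adjoinElement B π).comap (algebraMap F L) = B := by
  ext c
  refine ⟨fun hc => ?_, fun hc => Subring.subset_closure (Or.inl ⟨c, hc, rfl⟩)⟩
  obtain ⟨a, ha, b, hb, h⟩ := (mem_adjoinElement_iff ht hn hx).1 hc
  obtain rfl | hb0 := eq_or_ne b 0
  · rw [map_zero, zero_mul, add_zero, (algebraMap F L).injective.eq_iff] at h
    exact h ▸ ha
  · refine absurd ⟨(c - a) / b, ?_⟩ hπ
    rw [map_div₀, map_sub, h]
    field_simp [(map_ne_zero (algebraMap F L)).2 hb0]
    ring

theorem sq_eq_of_add_conj_of_mul_conj (htπ : π + σ π = algebraMap F L t)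
    (hnπ : π * σ π = algebraMap F L n) : π ^ 2 = algebraMap F L t * π - algebraMap F L n := by
  rw [← htπ, ← hnπ]; ring

theorem map_mem_adjoinElement (ht : t ∈ B) (hn : n ∈ B)
    (hx : π ^ 2 = algebraMap F L t * π - algebraMap F L n) (htπ : π + σ π = algebraMap F L t)
    {y : L} (hy : y ∈ adjoinElement B π) : σ y ∈ adjoinElement B π := by
  obtain ⟨a, ha, b, hb, rfl⟩ := (mem_adjoinElement_iff ht hn hx).1 hy
  refine (mem_adjoinElement_iff ht hn hx).2
    ⟨a + b * t, add_mem ha (mul_mem hb ht), -b, neg_mem hb, ?_⟩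
  rw [map_add, map_mul, AlgEquiv.commutes, AlgEquiv.commutes, eq_sub_of_add_eq' htπ]
  simp only [map_add, map_mul, map_neg]
  ring

theorem conj_conj_of_add_conj (htπ : π + σ π = algebraMap F L t) : σ (σ π) = π := by
  have h := congrArg σ htπ
  rw [map_add, AlgEquiv.commutes, ← htπ] at h
  linear_combination h

theorem sub_conj_ne_zero [CharZero L] (htπ : π + σ π = algebraMap F L t)
    (hπ : π ∉ (algebraMap F L).range) : π - σ π ≠ 0 := by
  refine fun h => hπ ⟨t / 2, ?_⟩
  rw [map_div₀, ← htπ, ← sub_eq_zero.1 h, map_ofNat]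
  ring

end AdjoinOverField

section TraceDual

variable {F L : Type*} [Field F] [Field L] [NumberField F] [NumberField L] [Algebra F L]
  {σ : L ≃ₐ[F] L} {B : Subring F} {π : L} {t n : F}

theorem trace_rat_mul_algebraMap (y : L) (a : F) :
    Algebra.trace ℚ L (y * algebraMap F L a) = Algebra.trace ℚ F (Algebra.trace F L y * a) := by
  rw [← Algebra.trace_trace (S := F), mul_comm, ← Algebra.smul_def, LinearMap.map_smul,
    smul_eq_mul, mul_comm]

theorem mem_traceDual_adjoinElement_iff (ht : t ∈ B) (hn : n ∈ B)
    (hx : π ^ 2 = algebraMap F L t * π - algebraMap F L n) {y : L} :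
    y ∈ traceDual L (adjoinElement B π) ↔
      Algebra.trace F L y ∈ traceDual F B ∧ Algebra.trace F L (y * π) ∈ traceDual F B := by
  have hπ : ∀ b : F, y * (algebraMap F L b * π) = y * π * algebraMap F L b := fun b => by ring
  constructor
  · intro hy
    refine ⟨fun a ha => ?_, fun b hb => ?_⟩
    · rw [← trace_rat_mul_algebraMap]
      exact hy _ ((mem_adjoinElement_iff ht hn hx).2 ⟨a, ha, 0, zero_mem B, by simp⟩)
    · rw [← trace_rat_mul_algebraMap, ← hπ]
      exact hy _ ((mem_adjoinElement_iff ht hn hx).2 ⟨0, zero_mem B, b, hb, by simp⟩)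
  · rintro ⟨h₁, h₂⟩ r hr
    obtain ⟨a, ha, b, hb, rfl⟩ := (mem_adjoinElement_iff ht hn hx).1 hr
    obtain ⟨k₁, hk₁⟩ := h₁ a ha
    obtain ⟨k₂, hk₂⟩ := h₂ b hb
    refine ⟨k₁ + k₂, ?_⟩
    rw [mul_add, map_add, hπ, trace_rat_mul_algebraMap, trace_rat_mul_algebraMap, hk₁, hk₂,
      Int.cast_add]

theorem algebraMap_div_sub_conj_mem_traceDual
    (htr : ∀ y, algebraMap F L (Algebra.trace F L y) = y + σ y) (ht : t ∈ B) (hn : n ∈ B)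
    (hx : π ^ 2 = algebraMap F L t * π - algebraMap F L n) (htπ : π + σ π = algebraMap F L t)
    (hπ : π ∉ (algebraMap F L).range) {w : F} (hw : w ∈ traceDual F B) :
    algebraMap F L w / (π - σ π) ∈ traceDual L (adjoinElement B π) ∧
      σ (algebraMap F L w / (π - σ π)) = -(algebraMap F L w / (π - σ π)) := by
  have hδ := sub_conj_ne_zero htπ hπ
  have hconj : σ (algebraMap F L w / (π - σ π)) = -(algebraMap F L w / (π - σ π)) := by
    rw [map_div₀, AlgEquiv.commutes, map_sub, conj_conj_of_add_conj htπ, ← neg_sub, div_neg]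
  refine ⟨(mem_traceDual_adjoinElement_iff ht hn hx).2 ⟨?_, ?_⟩, hconj⟩
  · have : Algebra.trace F L (algebraMap F L w / (π - σ π)) = 0 :=
      (algebraMap F L).injective (by rw [htr, hconj, add_neg_cancel, map_zero])
    exact this ▸ zero_mem _
  · have : Algebra.trace F L (algebraMap F L w / (π - σ π) * π) = w := by
      apply (algebraMap F L).injective
      rw [htr, map_mul, hconj]
      field_simp
      ring
    exact this.symm ▸ hw

theorem sub_conj_mul_eq (htr : ∀ y, algebraMap F L (Algebra.trace F L y) = y + σ y)
    (htπ : π + σ π = algebraMap F L t) (y : L) :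
    (π - σ π) * y = algebraMap F L (Algebra.trace F L (y * π) - t * Algebra.trace F L y)
      + algebraMap F L (Algebra.trace F L y) * π := by
  rw [map_sub, (algebraMap F L).map_mul, htr, htr, ← htπ, map_mul]
  ring

theorem span_pure_imaginary_traceDual_adjoinElement
    (htr : ∀ y, algebraMap F L (Algebra.trace F L y) = y + σ y) (ht : t ∈ B) (hn : n ∈ B)
    (hx : π ^ 2 = algebraMap F L t * π - algebraMap F L n) (htπ : π + σ π = algebraMap F L t)
    (hπ : π ∉ (algebraMap F L).range) :
    Submodule.span (adjoinElement B π) {y | y ∈ traceDual L (adjoinElement B π) ∧ σ y = -y}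
      = traceDual L (adjoinElement B π) := by
  refine le_antisymm (Submodule.span_le.2 fun y hy => hy.1) fun y hy => ?_
  obtain ⟨hv, hπv⟩ := (mem_traceDual_adjoinElement_iff ht hn hx).1 hy
  have hu : Algebra.trace F L (y * π) - t * Algebra.trace F L y ∈ traceDual F B :=
    sub_mem hπv (Submodule.smul_mem _ ⟨t, ht⟩ hv)
  have hy : y = algebraMap F L (Algebra.trace F L (y * π) - t * Algebra.trace F L y) / (π - σ π)
      + π * (algebraMap F L (Algebra.trace F L y) / (π - σ π)) := by
    have hδ := sub_conj_ne_zero htπ hπ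
    field_simp
    linear_combination sub_conj_mul_eq htr htπ y
  have hpure := fun {w} => algebraMap_div_sub_conj_mem_traceDual (w := w) htr ht hn hx htπ hπ
  rw [hy]
  exact add_mem (Submodule.subset_span (hpure hu))
    (Submodule.smul_mem _ (⟨π, Subring.subset_closure (Or.inr rfl)⟩ : adjoinElement B π)
      (Submodule.subset_span (hpure hv)))

end TraceDual

theorem adjoin_pi_to_Gorenstein_real_order_is_convenient_general
    (Kp K : Type*) [Field Kp] [NumberField Kp] [Field K] [NumberField K] [Algebra Kp K]
    (hdeg : Module.finrank Kp K = 2)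
    (conj : K ≃ₐ[Kp] K)
    (hconj_inv : ∀ x, conj (conj x) = x)
    (hfix : ∀ x : K, conj x = x ↔ x ∈ (algebraMap Kp K).range)
    (q : ℕ)
    (π : K)
    (hπnotreal : π ∉ (algebraMap Kp K).range)
    (hπq : π * conj π = (q : K))
    -- `B` is a Gorenstein order of `Kp` containing `π + π̄`
    (B : Subring Kp) (hB : IsOrder Kp B)
    (htrace : π + conj π ∈ B.map (algebraMap Kp K)) :
    -- Then `R = B[π]` is a convenient order with real subring `B`:
    IsOrder K (Subring.closure ((algebraMap Kp K) '' (B : Set Kp) ∪ {π})) ∧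
    (∀ x ∈ Subring.closure ((algebraMap Kp K) '' (B : Set Kp) ∪ {π}),
        conj x ∈ Subring.closure ((algebraMap Kp K) '' (B : Set Kp) ∪ {π})) ∧
    (Subring.closure ((algebraMap Kp K) '' (B : Set Kp) ∪ {π})).comap (algebraMap Kp K)
        = B ∧
    Submodule.span (Subring.closure ((algebraMap Kp K) '' (B : Set Kp) ∪ {π}))
        {x : K | x ∈ traceDual K (Subring.closure ((algebraMap Kp K) '' (B : Set Kp) ∪ {π}))
          ∧ conj x = -x}
      = traceDual K (Subring.closure ((algebraMap Kp K) '' (B : Set Kp) ∪ {π})) := by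
  obtain ⟨t, ht, htπ⟩ := htrace
  have hn : (q : Kp) ∈ B := natCast_mem B q
  have hnπ : π * conj π = algebraMap Kp K q := by rw [hπq, map_natCast]
  have hx := sq_eq_of_add_conj_of_mul_conj htπ.symm hnπ
  have htr := algebraMap_trace_eq_add_of_finrank_eq_two hdeg conj hconj_inv fun y => (hfix y).1
  have := hB.1
  exact ⟨⟨module_finite_int_adjoinElement ht hn hx,
      span_rat_adjoinElement_eq_top hB.2 (span_one_pair_eq_top_of_finrank_eq_two hdeg hπnotreal)⟩,
    fun y => map_mem_adjoinElement ht hn hx htπ.symm,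
    comap_adjoinElement ht hn hx hπnotreal,
    span_pure_imaginary_traceDual_adjoinElement htr ht hn hx htπ.symm hπnotreal⟩

/-- Let `K` be a CM field with maximal totally real subfield `Kp`, let `q`
be a positive integer, and let `π` be an algebraic integer with `K = Kp(π)`, `π ∉ Kp`, and
`π·π̄ = q`. If `B` is a Gorenstein order of `Kp` containing `π + π̄`, then `R = B[π]` is a
convenient order of `K` with real subring `R ∩ Kp = B`: it is an order, stable under complex
conjugation, its real subring is `B`, and its trace dual is generated as an `R`-module by
its pure imaginary elements. -/
theorem adjoin_pi_to_Gorenstein_real_order_is_convenient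
    (Kp K : Type*) [Field Kp] [NumberField Kp] [Field K] [NumberField K] [Algebra Kp K]
    (htotreal : ∀ (phi : Kp →+* ℂ) (x : Kp), (phi x).im = 0)
    (htotimag : ∀ phi : K →+* ℂ, ∃ x : K, (phi x).im ≠ 0)
    (hdeg : Module.finrank Kp K = 2)
    (conj : K ≃ₐ[Kp] K)
    (hconj_ne : conj ≠ AlgEquiv.refl)
    (hconj_inv : ∀ x, conj (conj x) = x)
    (hfix : ∀ x : K, conj x = x ↔ x ∈ (algebraMap Kp K).range)
    (q : ℕ) (hq : 0 < q)
    (π : K) (hπint : IsIntegral ℤ π)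
    (hgen : Algebra.adjoin Kp ({π} : Set K) = ⊤)
    (hπnotreal : π ∉ (algebraMap Kp K).range)
    (hπq : π * conj π = (q : K))
    -- `B` is a Gorenstein order of `Kp` containing `π + π̄`
    (B : Subring Kp) (hB : IsOrder Kp B) (hBGor : IsGorenstein Kp B)
    (htrace : π + conj π ∈ B.map (algebraMap Kp K)) :
    -- Then `R = B[π]` is a convenient order with real subring `B`:
    IsOrder K (Subring.closure ((algebraMap Kp K) '' (B : Set Kp) ∪ {π})) ∧
    (∀ x ∈ Subring.closure ((algebraMap Kp K) '' (B : Set Kp) ∪ {π}),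
        conj x ∈ Subring.closure ((algebraMap Kp K) '' (B : Set Kp) ∪ {π})) ∧
    (Subring.closure ((algebraMap Kp K) '' (B : Set Kp) ∪ {π})).comap (algebraMap Kp K)
        = B ∧
    Submodule.span (Subring.closure ((algebraMap Kp K) '' (B : Set Kp) ∪ {π}))
        {x : K | x ∈ traceDual K (Subring.closure ((algebraMap Kp K) '' (B : Set Kp) ∪ {π}))
          ∧ conj x = -x}
      = traceDual K (Subring.closure ((algebraMap Kp K) '' (B : Set Kp) ∪ {π})) :=
  adjoin_pi_to_Gorenstein_real_order_is_convenient_general Kp K hdeg conj hconj_inv hfix q π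
    hπnotreal hπq B hB htrace
end

section
/- Let K be a CM field of degree 2n over ℚ, let q be a positive integer, and let π be an algebraic integer with K = ℚ(π) and π·π̄ = q. Then the 2n elements 1, π, π̄, π², π̄², …, π^{n−1}, π̄^{n−1}, π^n form a basis of the ring ℤ[π, π̄] as a ℤ-module, and ℤ[π, π̄] ∩ K⁺ = ℤ[π + π̄]. -/
open NumberField Polynomial

/-!
Let `p = ∑ pᵢ Xⁱ` be the minimal polynomial of `π` over `ℤ`, of degree `2n`. Since `π̄ = q / π` is
also a root, `X²ⁿ p(q / X)` is an integer multiple of `p`; comparing coefficients gives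
`p₀ = e qⁿ` with `e = ±1` and `pᵢ qⁱ = p₀ p₂ₙ₋ᵢ`. Multiplying `p(π) = 0` by `π̄ⁿ / qⁿ` therefore
yields `πⁿ + e π̄ⁿ ∈ span_ℤ {πᵏ, π̄ᵏ : k < n}`. With `π π̄ = q` this makes
`span_ℤ {πᵏ, π̄ᵏ : k ≤ n}` stable under multiplication by `π` and by `π̄`, so it is `ℤ[π, π̄]`, and
the same relation removes `π̄ⁿ` from the spanning set. The remaining `2n = [K : ℚ]` elements span
`K = ℚ(π)` over `ℚ`, hence are independent. Finally `π² = (π + π̄) π - q` writes every element of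
`ℤ[π, π̄]` as `u + v π` with `u, v ∈ ℤ[π + π̄]`, and such an element lies in `K⁺` only if `v = 0`,
because `π̄ ≠ π`.
-/

section PowerSpan

variable {A : Type*} [CommRing A]

def powerSpan (x y : A) (m : ℕ) : Submodule ℤ A :=
  Submodule.span ℤ ((x ^ ·) '' Set.Iic m ∪ (y ^ ·) '' Set.Iic m)

lemma powerSpan_comm (x y : A) (m : ℕ) : powerSpan x y m = powerSpan y x m := by
  rw [powerSpan, powerSpan, Set.union_comm]

variable {x y : A} {q : ℤ}

lemma pow_mem_powerSpan_left {k m : ℕ} (h : k ≤ m) : x ^ k ∈ powerSpan x y m :=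
  Submodule.subset_span (Or.inl ⟨k, h, rfl⟩)

lemma pow_mem_powerSpan_right {k m : ℕ} (h : k ≤ m) : y ^ k ∈ powerSpan x y m :=
  Submodule.subset_span (Or.inr ⟨k, h, rfl⟩)

lemma pow_mul_pow_of_le (hxy : x * y = q) {i k : ℕ} (h : i ≤ k) :
    x ^ i * y ^ k = q ^ i * y ^ (k - i) := by
  rw [← Nat.add_sub_cancel' h, pow_add, ← mul_assoc, ← mul_pow, hxy, Nat.add_sub_cancel_left]

lemma mul_mem_powerSpan_succ (hxy : x * y = q) {m : ℕ} {z : A} (hz : z ∈ powerSpan x y m) :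
    x * z ∈ powerSpan x y (m + 1) := by
  induction hz using Submodule.span_induction with
  | mem w hw =>
    rcases hw with ⟨k, hk, rfl⟩ | ⟨_ | k, hk, rfl⟩ <;> dsimp only at hk ⊢ <;> rw [Set.mem_Iic] at hk
    · rw [← pow_succ']
      exact pow_mem_powerSpan_left (Nat.succ_le_succ hk)
    · simpa using pow_mem_powerSpan_left (x := x) (y := y) (Nat.le_add_left 1 m)
    · rw [pow_succ', ← mul_assoc, hxy, ← zsmul_eq_mul]
      exact Submodule.smul_mem _ _ (pow_mem_powerSpan_right (by omega))
  | zero => simp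
  | add w w' _ _ hw hw' => rw [mul_add]; exact add_mem hw hw'
  | smul a w _ hw => rw [mul_smul_comm]; exact Submodule.smul_mem _ _ hw

lemma mul_mem_powerSpan (hxy : x * y = q) {m : ℕ} {e : ℤ}
    (hrel : x ^ (m + 1) + e * y ^ (m + 1) ∈ powerSpan x y m) {z : A}
    (hz : z ∈ powerSpan x y (m + 1)) : x * z ∈ powerSpan x y (m + 1) := by
  induction hz using Submodule.span_induction with
  | mem w hw =>
    obtain ⟨k, hk, rfl⟩ | ⟨k, hk, rfl⟩ := hw <;> dsimp only <;>
      rcases (Set.mem_Iic.mp hk).lt_or_eq with hk | rfl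
    · exact mul_mem_powerSpan_succ hxy (pow_mem_powerSpan_left (Nat.lt_succ_iff.mp hk))
    · have h : x * x ^ (m + 1) = x * (x ^ (m + 1) + e * y ^ (m + 1)) - (e * q) • y ^ m := by
        rw [zsmul_eq_mul]; push_cast; linear_combination (-(e : A) * y ^ m) * hxy
      rw [h]
      exact sub_mem (mul_mem_powerSpan_succ hxy hrel)
        (Submodule.smul_mem _ _ (pow_mem_powerSpan_right m.le_succ))
    · exact mul_mem_powerSpan_succ hxy (pow_mem_powerSpan_right (Nat.lt_succ_iff.mp hk))
    · rw [pow_succ', ← mul_assoc, hxy, ← zsmul_eq_mul]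
      exact Submodule.smul_mem _ _ (pow_mem_powerSpan_right m.le_succ)
  | zero => simp
  | add w w' _ _ hw hw' => rw [mul_add]; exact add_mem hw hw'
  | smul a w _ hw => rw [mul_smul_comm]; exact Submodule.smul_mem _ _ hw

lemma coe_powerSpan_eq_closure (hxy : x * y = q) {m : ℕ} {e : ℤ} (he : e * e = 1)
    (hrel : x ^ (m + 1) + e * y ^ (m + 1) ∈ powerSpan x y m) :
    (powerSpan x y (m + 1) : Set A) = Subring.closure {x, y} := by
  have hrel' : y ^ (m + 1) + e * x ^ (m + 1) ∈ powerSpan y x m := by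
    rw [powerSpan_comm]
    convert Submodule.smul_mem _ e hrel using 1
    have he' : (e : A) * e = 1 := by rw [← Int.cast_mul, he, Int.cast_one]
    rw [zsmul_eq_mul]; linear_combination (-y ^ (m + 1)) * he'
  have hclosure : (Subring.closure {x, y} : Set A) =
      (Submodule.span ℤ (Submonoid.closure {x, y} : Set A) : Set A) := by
    rw [← Algebra.adjoin_eq_span, Algebra.adjoin_int]; rfl
  rw [hclosure, SetLike.coe_set_eq]
  refine le_antisymm (Submodule.span_mono ?_) (Submodule.span_le.mpr fun w hw => ?_)
  · rintro _ (⟨k, -, rfl⟩ | ⟨k, -, rfl⟩)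
    · exact pow_mem (Submonoid.subset_closure (Set.mem_insert x _)) k
    · exact pow_mem (Submonoid.subset_closure (Set.mem_insert_of_mem x (Set.mem_singleton y))) k
  induction hw using Submonoid.closure_induction_left with
  | one => simpa using pow_mem_powerSpan_left (x := x) (y := y) (Nat.zero_le (m + 1))
  | mul_left a ha w _ hw =>
    rcases ha with rfl | rfl
    · exact mul_mem_powerSpan hxy hrel hw
    · rw [powerSpan_comm] at hw ⊢
      exact mul_mem_powerSpan (by rwa [mul_comm]) hrel' hw

def interleavedPow (x y : A) (j : ℕ) : A :=
  if j % 2 = 1 then x ^ ((j + 1) / 2) else y ^ (j / 2)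

lemma range_interleavedPow (x y : A) (n : ℕ) :
    Set.range (fun j : Fin (2 * n) => interleavedPow x y j) =
      (x ^ ·) '' Set.Ioc 0 n ∪ (y ^ ·) '' Set.Iio n := by
  ext z
  simp only [Set.mem_range, Set.mem_union, Set.mem_image, Set.mem_Ioc, Set.mem_Iio,
    interleavedPow]
  constructor
  · rintro ⟨j, rfl⟩
    have := j.isLt
    split_ifs with h
    · exact Or.inl ⟨(j + 1) / 2, ⟨by omega, by omega⟩, rfl⟩
    · exact Or.inr ⟨j / 2, by omega, rfl⟩
  · rintro (⟨k, ⟨hk0, hk⟩, rfl⟩ | ⟨k, hk, rfl⟩)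
    · refine ⟨⟨2 * k - 1, by omega⟩, ?_⟩
      simp [show (2 * k - 1) % 2 = 1 by omega, show (2 * k - 1 + 1) / 2 = k by omega]
    · exact ⟨⟨2 * k, by omega⟩, by simp⟩

lemma span_range_interleavedPow {m : ℕ} {e : ℤ} (he : e * e = 1)
    (hrel : x ^ (m + 1) + e * y ^ (m + 1) ∈ powerSpan x y m) :
    Submodule.span ℤ (Set.range fun j : Fin (2 * (m + 1)) => interleavedPow x y j) =
      powerSpan x y (m + 1) := by
  rw [range_interleavedPow]
  set S := Submodule.span ℤ ((x ^ ·) '' Set.Ioc 0 (m + 1) ∪ (y ^ ·) '' Set.Iio (m + 1))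
  refine le_antisymm (Submodule.span_mono (Set.union_subset_union
    (Set.image_mono Set.Ioc_subset_Iic_self) (Set.image_mono Set.Iio_subset_Iic_self))) ?_
  have hy : ∀ k ≤ m, y ^ k ∈ S := fun k hk =>
    Submodule.subset_span (Or.inr ⟨k, Nat.lt_succ_of_le hk, rfl⟩)
  have hx : ∀ k ≤ m + 1, x ^ k ∈ S := by
    rintro (_ | k) hk
    · simpa using hy 0 m.zero_le
    · exact Submodule.subset_span (Or.inl ⟨k + 1, ⟨k.succ_pos, hk⟩, rfl⟩)
  have hrelS : x ^ (m + 1) + e * y ^ (m + 1) ∈ S := by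
    refine Submodule.span_le.mpr ?_ hrel
    rintro _ (⟨k, hk, rfl⟩ | ⟨k, hk, rfl⟩)
    · exact hx k (Nat.le_succ_of_le hk)
    · exact hy k hk
  have hyS : y ^ (m + 1) ∈ S := by
    have he' : (e : A) * e = 1 := by rw [← Int.cast_mul, he, Int.cast_one]
    have h : y ^ (m + 1) = e • (x ^ (m + 1) + e * y ^ (m + 1)) - e • x ^ (m + 1) := by
      simp only [zsmul_eq_mul]; linear_combination (-y ^ (m + 1)) * he'
    rw [h]
    exact sub_mem (Submodule.smul_mem _ _ hrelS) (Submodule.smul_mem _ _ (hx _ le_rfl))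
  refine Submodule.span_le.mpr ?_
  rintro _ (⟨k, hk, rfl⟩ | ⟨k, hk, rfl⟩)
  · exact hx k hk
  · rcases (Set.mem_Iic.mp hk).lt_or_eq with hk | rfl
    · exact hy k (Nat.lt_succ_iff.mp hk)
    · exact hyS

lemma exists_add_mul_of_mem_closure (hxy : x * y = q) {z : A}
    (hz : z ∈ Subring.closure {x, y}) :
    ∃ u ∈ Subring.closure {x + y}, ∃ v ∈ Subring.closure {x + y}, z = u + v * x := by
  have hs : x + y ∈ Subring.closure {x + y} := Subring.subset_closure rfl
  induction hz using Subring.closure_induction with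
  | mem w hw =>
    rcases hw with rfl | rfl
    · exact ⟨0, zero_mem _, 1, one_mem _, by ring⟩
    · exact ⟨x + w, hs, -1, neg_mem (one_mem _), by ring⟩
  | zero => exact ⟨0, zero_mem _, 0, zero_mem _, by ring⟩
  | one => exact ⟨1, one_mem _, 0, zero_mem _, by ring⟩
  | add w w' _ _ hw hw' =>
    obtain ⟨u, hu, v, hv, rfl⟩ := hw
    obtain ⟨u', hu', v', hv', rfl⟩ := hw'
    exact ⟨u + u', add_mem hu hu', v + v', add_mem hv hv', by ring⟩
  | neg w _ hw =>
    obtain ⟨u, hu, v, hv, rfl⟩ := hw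
    exact ⟨-u, neg_mem hu, -v, neg_mem hv, by ring⟩
  | mul w w' _ _ hw hw' =>
    obtain ⟨u, hu, v, hv, rfl⟩ := hw
    obtain ⟨u', hu', v', hv', rfl⟩ := hw'
    -- `x ^ 2 = (x + y) x - q`
    refine ⟨u * u' - q * (v * v'), ?_, u * v' + u' * v + v * v' * (x + y), ?_, ?_⟩
    · exact sub_mem (mul_mem hu hu') (mul_mem (intCast_mem _ q) (mul_mem hv hv'))
    · exact add_mem (add_mem (mul_mem hu hv') (mul_mem hu' hv)) (mul_mem (mul_mem hv hv') hs)
    · linear_combination (-(v * v')) * hxy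

end PowerSpan

section MinpolyInt

variable {K : Type*} [Field K] [CharZero K] {x y : K} {q : ℤ}

lemma minpoly_int_coeff_zero_ne_zero (hx : IsIntegral ℤ x) (hx0 : x ≠ 0) :
    (minpoly ℤ x).coeff 0 ≠ 0 := by
  have h := minpoly.coeff_zero_ne_zero (hx.tower_top : IsIntegral ℚ x) hx0
  rw [minpoly.isIntegrallyClosed_eq_field_fractions' ℚ hx, coeff_map] at h
  exact fun h0 => h (by rw [h0, map_zero])

lemma minpoly_int_coeff_natDegree_sub_mul_pow (hxy : x * y = q) (hq : q ≠ 0) (hx : IsIntegral ℤ x)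
    (hy : aeval y (minpoly ℤ x) = 0) {j : ℕ} (hj : j ≤ (minpoly ℤ x).natDegree) :
    (minpoly ℤ x).coeff ((minpoly ℤ x).natDegree - j) * q ^ ((minpoly ℤ x).natDegree - j) =
      (minpoly ℤ x).coeff 0 * (minpoly ℤ x).coeff j := by
  set p := minpoly ℤ x
  have hq' : (q : K) ≠ 0 := Int.cast_ne_zero.mpr hq
  have hx0 : x ≠ 0 := left_ne_zero_of_mul (hxy ▸ hq')
  have hy0 : y ≠ 0 := right_ne_zero_of_mul (hxy ▸ hq')
  have htrail : p.natTrailingDegree = 0 :=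
    natTrailingDegree_eq_zero.mpr (Or.inr (minpoly_int_coeff_zero_ne_zero hx hx0))
  -- `R = X ^ d p(q / X)`
  set R := p.reverse.scaleRoots q
  have hR : aeval x R = 0 := by
    let _ : Invertible y := invertibleOfNonzero hy0
    have h := scaleRoots_aeval_eq_zero (r := q) ((eval₂_reverse_eq_zero_iff _ y p).mpr hy)
    rwa [invOf_eq_inv, algebraMap_int_eq, eq_intCast, ← hxy, mul_inv_cancel_right₀ hy0] at h
  have hdeg : R.natDegree = p.natDegree := by
    rw [natDegree_scaleRoots, reverse_natDegree, htrail, Nat.sub_zero]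
  have hRp : R = C (p.coeff 0) * p := by
    have h := eq_leadingCoeff_mul_of_monic_of_dvd_of_natDegree_le (minpoly.monic hx)
      (minpoly.isIntegrallyClosed_dvd hx hR) hdeg.le
    rwa [leadingCoeff_scaleRoots, reverse_leadingCoeff, trailingCoeff, htrail] at h
  have h := congrArg (coeff · j) hRp
  simpa [R, coeff_reverse, revAt_le hj, reverse_natDegree, htrail] using h

lemma exists_minpoly_int_coeff_mul_pow_eq (hxy : x * y = q) (hq : q ≠ 0) (hx : IsIntegral ℤ x)
    (hy : aeval y (minpoly ℤ x) = 0) {n : ℕ} (hdeg : (minpoly ℤ x).natDegree = 2 * n) :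
    ∃ e : ℤ, e * e = 1 ∧ ∀ i ≤ 2 * n,
      (minpoly ℤ x).coeff i * q ^ i = e * q ^ n * (minpoly ℤ x).coeff (2 * n - i) := by
  set p := minpoly ℤ x
  have hcoeff : ∀ j ≤ 2 * n, p.coeff (2 * n - j) * q ^ (2 * n - j) = p.coeff 0 * p.coeff j :=
    fun j hj => hdeg ▸ minpoly_int_coeff_natDegree_sub_mul_pow hxy hq hx hy (hdeg ▸ hj)
  obtain ⟨e, he, hc0⟩ : ∃ e : ℤ, e * e = 1 ∧ p.coeff 0 = e * q ^ n := by
    have hlead : p.coeff (2 * n) = 1 := hdeg ▸ (minpoly.monic hx).coeff_natDegree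
    have h := hcoeff 0 (Nat.zero_le _)
    rw [Nat.sub_zero, hlead, one_mul, pow_mul', sq] at h
    rcases mul_self_eq_mul_self_iff.mp h.symm with h | h
    · exact ⟨1, rfl, by rw [h, one_mul]⟩
    · exact ⟨-1, rfl, by rw [h, neg_one_mul]⟩
  refine ⟨e, he, fun i hi => ?_⟩
  have h := hcoeff (2 * n - i) (Nat.sub_le _ _)
  rwa [Nat.sub_sub_self hi, hc0] at h

lemma pow_add_mul_pow_mem_powerSpan (hxy : x * y = q) (hq : q ≠ 0) {p : ℤ[X]} (hp : p.Monic)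
    {m : ℕ} (hdeg : p.natDegree = 2 * (m + 1)) (hpx : aeval x p = 0) {e : ℤ}
    (hpal : ∀ i ≤ 2 * (m + 1), p.coeff i * q ^ i = e * q ^ (m + 1) * p.coeff (2 * (m + 1) - i)) :
    x ^ (m + 1) + e * y ^ (m + 1) ∈ powerSpan x y m := by
  set n := m + 1
  have hlead : p.coeff (2 * n) = 1 := hdeg ▸ hp.coeff_natDegree
  set w : ℕ → K := fun i =>
    if i < n then (e * p.coeff (2 * n - i)) • y ^ (n - i) else p.coeff i • x ^ (i - n)
  have hterm : ∀ i ≤ 2 * n, y ^ n * (p.coeff i • x ^ i) = (q : K) ^ n * w i := by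
    intro i hi
    simp only [w, zsmul_eq_mul]
    split_ifs with hin
    · have h : ((p.coeff i * q ^ i : ℤ) : K) = ((e * q ^ n * p.coeff (2 * n - i) : ℤ) : K) := by
        rw [hpal i hi]
      push_cast at h ⊢
      linear_combination (p.coeff i : K) * pow_mul_pow_of_le hxy hin.le + y ^ (n - i) * h
    · linear_combination
        (p.coeff i : K) * pow_mul_pow_of_le (mul_comm y x ▸ hxy) (not_lt.mp hin)
  have hsum : ∑ i ∈ Finset.range (2 * n + 1), w i = 0 := by
    have h := congrArg (y ^ n * ·) (aeval_eq_sum_range (p := p) x)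
    simp only [hpx, hdeg, mul_zero, Finset.mul_sum] at h
    rw [Finset.sum_congr rfl fun i hi => hterm i (Nat.lt_succ_iff.mp (Finset.mem_range.mp hi)),
      ← Finset.mul_sum] at h
    exact (mul_eq_zero.mp h.symm).resolve_left (pow_ne_zero _ (Int.cast_ne_zero.mpr hq))
  have hw0 : w 0 = e * y ^ n := by simp [w, n, hlead]
  have hw2n : w (2 * n) = x ^ n := by
    simp only [w, if_neg (show ¬2 * n < n by omega), hlead, one_smul, show 2 * n - n = n by omega]
  have hends : x ^ n + e * y ^ n = -∑ i ∈ Finset.range (2 * m + 1), w (i + 1) := by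
    rw [show 2 * n + 1 = 2 * m + 1 + 1 + 1 by omega, Finset.sum_range_succ,
      Finset.sum_range_succ', hw0, show 2 * m + 1 + 1 = 2 * n by omega, hw2n] at hsum
    linear_combination hsum
  rw [hends]
  refine neg_mem (Submodule.sum_mem _ fun i hi => ?_)
  have hi := Finset.mem_range.mp hi
  simp only [w]
  split_ifs with hin
  · exact Submodule.smul_mem _ _ (pow_mem_powerSpan_right (by omega))
  · exact Submodule.smul_mem _ _ (pow_mem_powerSpan_left (by omega))

lemma natDegree_minpoly_int_eq_finrank (hx : IsIntegral ℤ x) (hgen : Algebra.adjoin ℚ {x} = ⊤) :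
    (minpoly ℤ x).natDegree = Module.finrank ℚ K := by
  rw [(PowerBasis.ofAdjoinEqTop hx.tower_top hgen).finrank, PowerBasis.ofAdjoinEqTop_dim,
    minpoly.isIntegrallyClosed_eq_field_fractions' ℚ hx, (minpoly.monic hx).natDegree_map]

lemma linearIndependent_int_of_pow_mem_span {ι : Type*} [Fintype ι] {v : ι → K}
    (hgen : Algebra.adjoin ℚ {x} = ⊤) (hcard : Fintype.card ι = Module.finrank ℚ K)
    (hv : ∀ k : ℕ, x ^ k ∈ Submodule.span ℤ (Set.range v)) : LinearIndependent ℤ v := by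
  refine (linearIndependent_of_top_le_span_of_card_eq_finrank ?_ hcard).restrict_scalars' ℤ
  rw [← Algebra.top_toSubmodule, ← hgen, Algebra.adjoin_eq_span, Submodule.span_le]
  intro z hz
  obtain ⟨k, rfl⟩ := Submonoid.mem_closure_singleton.mp hz
  exact Submodule.span_le_restrictScalars ℤ ℚ _ (hv k)

end MinpolyInt

lemma apply_ne_self_of_adjoin_eq_top {F K : Type*} [Field F] [Field K] [CharZero K]
    [Algebra F K] {σ : K ≃ₐ[F] K} (hσ : σ ≠ AlgEquiv.refl) {x : K}
    (hgen : Algebra.adjoin ℚ {x} = ⊤) : σ x ≠ x := by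
  intro h
  have hid := AlgHom.ext_of_adjoin_eq_top hgen (φ₁ := (σ : K →+* K).toRatAlgHom)
    (φ₂ := AlgHom.id ℚ K) (by simpa using h)
  exact hσ (AlgEquiv.ext fun z => DFunLike.congr_fun hid z)

lemma comap_closure_eq_closure {F K : Type*} [Field F] [Field K] [Algebra F K] (σ : K ≃ₐ[F] K)
    {x : K} (hx : σ x ≠ x) {q : ℤ} (hxq : x * σ x = q) {a : F}
    (ha : algebraMap F K a = x + σ x) :
    (Subring.closure {x, σ x}).comap (algebraMap F K) = Subring.closure {a} := by
  have hmap : Subring.closure {x + σ x} = (Subring.closure {a}).map (algebraMap F K) := by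
    rw [RingHom.map_closure, Set.image_singleton, ha]
  refine le_antisymm (fun b hb => ?_) (Subring.closure_le.mpr ?_)
  · obtain ⟨u, hu, v, hv, hb⟩ := exists_add_mul_of_mem_closure hxq hb
    rw [hmap] at hu hv
    obtain ⟨u, hu, rfl⟩ := hu
    obtain ⟨v, -, rfl⟩ := hv
    obtain rfl : v = 0 := by
      by_contra hv0
      have hxF : x = algebraMap F K ((b - u) / v) := by
        rw [map_div₀, map_sub, hb, add_sub_cancel_left,
          mul_div_cancel_left₀ x ((_root_.map_ne_zero _).mpr hv0)]
      exact hx (by rw [hxF, AlgEquiv.commutes])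
    rw [map_zero, zero_mul, add_zero, (algebraMap F K).injective.eq_iff] at hb
    exact hb ▸ hu
  · rintro _ rfl
    rw [SetLike.mem_coe, Subring.mem_comap, ha]
    exact add_mem (Subring.subset_closure (Set.mem_insert _ _))
      (Subring.subset_closure (Set.mem_insert_of_mem _ rfl))

theorem minimal_order_basis_general
    (n : ℕ) (hn : 0 < n)
    (Kp K : Type*) [Field Kp] [Field K] [NumberField K] [Algebra Kp K]
    (hdegQ : Module.finrank ℚ K = 2 * n)
    (conj : K ≃ₐ[Kp] K)
    (hconj_ne : conj ≠ AlgEquiv.refl)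
    (q : ℕ) (hq : 0 < q)
    (π : K) (hπint : IsIntegral ℤ π)
    (hgen : Algebra.adjoin ℚ ({π} : Set K) = ⊤)
    (hπq : π * conj π = (q : K)) :
    -- the `2n` elements `1, π, π̄, π², π̄², …, π^(n-1), π̄^(n-1), π^n`
    -- (listed as `f 0, f 1, …, f (2n-1)`) are `ℤ`-linearly independent ...
    LinearIndependent ℤ
      (fun j : Fin (2 * n) =>
        if (j : ℕ) % 2 = 1 then π ^ (((j : ℕ) + 1) / 2) else (conj π) ^ ((j : ℕ) / 2)) ∧
    -- ... and span `ℤ[π, π̄]` as a `ℤ`-module ...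
    (Submodule.span ℤ
        (Set.range (fun j : Fin (2 * n) =>
          if (j : ℕ) % 2 = 1 then π ^ (((j : ℕ) + 1) / 2) else (conj π) ^ ((j : ℕ) / 2)))
        : Set K)
      = (Subring.closure {π, conj π} : Set K) ∧
    -- ... and `ℤ[π, π̄] ∩ Kp = ℤ[π + π̄]`.
    (∀ a : Kp, algebraMap Kp K a = π + conj π →
      (Subring.closure {π, conj π}).comap (algebraMap Kp K) = Subring.closure {a}) := by
  obtain ⟨m, rfl⟩ := Nat.exists_eq_add_one_of_ne_zero hn.ne'
  have hπq' : π * conj π = ((q : ℤ) : K) := by rw [Int.cast_natCast, hπq]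
  have hroot : aeval (conj π) (minpoly ℤ π) = 0 := by
    simpa using aeval_algHom_apply (conj : K →+* K).toIntAlgHom π (minpoly ℤ π)
  have hdeg : (minpoly ℤ π).natDegree = 2 * (m + 1) :=
    (natDegree_minpoly_int_eq_finrank hπint hgen).trans hdegQ
  have hq' : (q : ℤ) ≠ 0 := by exact_mod_cast hq.ne'
  obtain ⟨e, he, hpal⟩ := exists_minpoly_int_coeff_mul_pow_eq hπq' hq' hπint hroot hdeg
  have hrel := pow_add_mul_pow_mem_powerSpan hπq' hq' (minpoly.monic hπint) hdeg
    (minpoly.aeval ℤ π) hpal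
  have hspan : (Submodule.span ℤ (Set.range fun j : Fin (2 * (m + 1)) =>
      interleavedPow π (conj π) j) : Set K) = Subring.closure {π, conj π} := by
    rw [span_range_interleavedPow he hrel, coe_powerSpan_eq_closure hπq' he hrel]
  have hli := linearIndependent_int_of_pow_mem_span
    (v := fun j : Fin (2 * (m + 1)) => interleavedPow π (conj π) j) hgen (by simp [hdegQ])
    fun k => by
      rw [← SetLike.mem_coe, hspan]
      exact pow_mem (Subring.subset_closure (Set.mem_insert _ _)) k
  exact ⟨hli, hspan, fun a ha =>
    comap_closure_eq_closure conj (apply_ne_self_of_adjoin_eq_top hconj_ne hgen) hπq' ha⟩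

/-- Let `K` be a CM field of degree `2n` over `ℚ`, let `q` be a positive
integer, and let `π` be an algebraic integer with `K = ℚ(π)` and `π·π̄ = q`. Then the `2n`
elements `1, π, π̄, π², π̄², …, π^(n-1), π̄^(n-1), π^n` form a `ℤ`-basis of `ℤ[π, π̄]`,
and `ℤ[π, π̄] ∩ Kp = ℤ[π + π̄]`. -/
theorem minimal_order_basis
    (n : ℕ) (hn : 0 < n)
    (Kp K : Type*) [Field Kp] [NumberField Kp] [Field K] [NumberField K] [Algebra Kp K]
    (htotreal : ∀ (phi : Kp →+* ℂ) (x : Kp), (phi x).im = 0)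
    (htotimag : ∀ phi : K →+* ℂ, ∃ x : K, (phi x).im ≠ 0)
    (hdeg : Module.finrank Kp K = 2)
    (hdegQ : Module.finrank ℚ K = 2 * n)
    (conj : K ≃ₐ[Kp] K)
    (hconj_ne : conj ≠ AlgEquiv.refl)
    (hconj_inv : ∀ x, conj (conj x) = x)
    (hfix : ∀ x : K, conj x = x ↔ x ∈ (algebraMap Kp K).range)
    (q : ℕ) (hq : 0 < q)
    (π : K) (hπint : IsIntegral ℤ π)
    (hgen : Algebra.adjoin ℚ ({π} : Set K) = ⊤)
    (hπq : π * conj π = (q : K)) :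
    -- the `2n` elements `1, π, π̄, π², π̄², …, π^(n-1), π̄^(n-1), π^n`
    -- (listed as `f 0, f 1, …, f (2n-1)`) are `ℤ`-linearly independent ...
    LinearIndependent ℤ
      (fun j : Fin (2 * n) =>
        if (j : ℕ) % 2 = 1 then π ^ (((j : ℕ) + 1) / 2) else (conj π) ^ ((j : ℕ) / 2)) ∧
    -- ... and span `ℤ[π, π̄]` as a `ℤ`-module ...
    (Submodule.span ℤ
        (Set.range (fun j : Fin (2 * n) =>
          if (j : ℕ) % 2 = 1 then π ^ (((j : ℕ) + 1) / 2) else (conj π) ^ ((j : ℕ) / 2)))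
        : Set K)
      = (Subring.closure {π, conj π} : Set K) ∧
    -- ... and `ℤ[π, π̄] ∩ Kp = ℤ[π + π̄]`.
    (∀ a : Kp, algebraMap Kp K a = π + conj π →
      (Subring.closure {π, conj π}).comap (algebraMap Kp K) = Subring.closure {a}) :=
  minimal_order_basis_general n hn Kp K hdegQ conj hconj_ne q hq π hπint hgen hπq
end

section
/- Let K be a CM field with maximal totally real subfield K⁺. Suppose there is a unit u of 𝓞_K such that u·ū is not the square of a unit of 𝓞_{K⁺}. Then K is obtained from K⁺ by adjoining the square root of a unit: there exist a unit ε of 𝓞_{K⁺} and an element x ∈ K with x² = ε and K = K⁺(x). -/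
/-!
Every complex embedding turns `conj` into complex conjugation, so `z = u / ū` has absolute
value `1` at every place and is a root of unity. A root of unity `z` is `s²` or `-s²` for a power
`s` of `z`, or has a power `s` with `s² = -1`. Since `s̄ = s⁻¹`, in the first two cases
`t = u / s` satisfies `t̄ = ±t` and `t t̄ = u ū`; the sign `+` would make `u ū` the square of
the real unit `t`. So in all remaining cases there is a unit `t` with `t̄ = -t`: it lies outside
`K⁺`, hence generates `K` over `K⁺`, while `t²` is a unit of `K⁺`.
-/

open NumberField NumberField.ComplexEmbedding NumberField.Units

theorem IsOfFinOrder.exists_eq_sq_or_eq_neg_sq_or_sq_eq_neg_one {R : Type*} [Ring R]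
    [NoZeroDivisors R] {z : R} (hz : IsOfFinOrder z) :
    ∃ k : ℕ, z = (z ^ k) ^ 2 ∨ z = -(z ^ k) ^ 2 ∨ (z ^ k) ^ 2 = -1 := by
  obtain ⟨m, hm | hm⟩ := Nat.even_or_odd' (orderOf z)
  · have hzm : z ^ m = -1 := by
      have hpos := hz.orderOf_pos
      refine (sq_eq_one_iff.mp ?_).resolve_left fun h ↦ ?_
      · rw [← pow_mul, mul_comm, ← hm, pow_orderOf_eq_one]
      · exact absurd (orderOf_le_of_pow_eq_one (by omega) h) (by omega)
    obtain ⟨q, rfl | rfl⟩ := Nat.even_or_odd' m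
    · exact ⟨q, Or.inr (Or.inr (by rw [← pow_mul, mul_comm, hzm]))⟩
    · refine ⟨q + 1, Or.inr (Or.inl ?_)⟩
      rw [← pow_mul, show (q + 1) * 2 = 2 * q + 1 + 1 by ring, pow_succ, hzm, neg_one_mul,
        neg_neg]
  · refine ⟨m + 1, Or.inl ?_⟩
    rw [← pow_mul, show (m + 1) * 2 = 2 * m + 1 + 1 by ring, pow_succ, ← hm,
      pow_orderOf_eq_one, one_mul]

section CommGroup

variable {G : Type*} [CommGroup G] (c : G →* G) {u s : G}

theorem map_mul_inv_eq_of_map_eq_inv (hs : c s = s⁻¹) :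
    c (u * s⁻¹) = (u * (c u)⁻¹)⁻¹ * s ^ 2 * (u * s⁻¹) := by
  rw [map_mul, map_inv, hs, inv_inv]
  simp [pow_two, mul_assoc, mul_left_comm, mul_comm]

theorem mul_map_eq_mul_map_mul_inv (hs : c s = s⁻¹) :
    u * c u = u * s⁻¹ * c (u * s⁻¹) := by
  rw [map_mul, map_inv, hs, inv_inv, mul_mul_mul_comm, inv_mul_cancel, mul_one]

end CommGroup

theorem Units.exists_map_eq_neg_or_mul_map_eq_sq {R : Type*} [CommRing R] [IsDomain R]
    {σ : R →+* R} (hσ : Function.Involutive σ) (u : Rˣ)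
    (hz : IsOfFinOrder (u * (Units.map σ u)⁻¹)) :
    (∃ t : Rˣ, σ t = -(t : R)) ∨ ∃ e : Rˣ, σ e = e ∧ (u : R) * σ u = e ^ 2 := by
  set c : Rˣ →* Rˣ := Units.map σ
  set z := u * (c u)⁻¹
  have hcz (k : ℕ) : c (z ^ k) = (z ^ k)⁻¹ := by
    have : c (c u) = u := Units.ext (hσ u)
    rw [map_pow, map_mul, map_inv, this, ← inv_pow, mul_inv_rev, inv_inv, mul_comm]
  obtain ⟨k, hk⟩ :=
    ((Units.coeHom R).isOfFinOrder hz).exists_eq_sq_or_eq_neg_sq_or_sq_eq_neg_one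
  replace hk : z = (z ^ k) ^ 2 ∨ z = -(z ^ k) ^ 2 ∨ (z ^ k) ^ 2 = -1 := by
    simpa [Units.ext_iff] using hk
  have hmap := map_mul_inv_eq_of_map_eq_inv c (u := u) (hcz k)
  rcases hk with h | h | h
  · rw [← h, inv_mul_cancel, one_mul] at hmap
    refine Or.inr ⟨u * (z ^ k)⁻¹, congrArg Units.val hmap, ?_⟩
    have hmul := mul_map_eq_mul_map_mul_inv c (u := u) (hcz k)
    rw [hmap, ← pow_two] at hmul
    simpa [c] using congrArg Units.val hmul
  · rw [neg_eq_iff_eq_neg.mp h.symm, mul_neg, inv_mul_cancel, neg_one_mul] at hmap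
    exact Or.inl ⟨u * (z ^ k)⁻¹, by simpa [c] using congrArg Units.val hmap⟩
  · have hinv : (z ^ k)⁻¹ = -z ^ k :=
      inv_eq_of_mul_eq_one_right (by rw [mul_neg, ← pow_two, h, neg_neg])
    exact Or.inl ⟨z ^ k, by simpa [c, hinv] using congrArg Units.val (hcz k)⟩

theorem Algebra.IsQuadraticExtension.adjoin_singleton_eq_top {F E : Type*} [Field F] [Field E]
    [Algebra F E] [Algebra.IsQuadraticExtension F E] {x : E}
    (hx : x ∉ Set.range (algebraMap F E)) : Algebra.adjoin F {x} = ⊤ := by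
  have := Subalgebra.isSimpleOrder_of_finrank_prime F E (finrank_eq_two F E ▸ Nat.prime_two)
  refine (eq_bot_or_eq_top _).resolve_left fun hbot ↦ hx ?_
  rw [← Algebra.mem_bot, ← hbot]
  exact Algebra.self_mem_adjoin_singleton F x

section Quadratic

variable {k K : Type*} [Field k] [Field K] [Algebra k K] [Algebra.IsQuadraticExtension k K]
  [Algebra.IsSeparable k K] {σ : Gal(K/k)}

theorem Algebra.IsQuadraticExtension.eq_one_or_eq_of_ne_one (hσ : σ ≠ 1) (τ : Gal(K/k)) :
    τ = 1 ∨ τ = σ := by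
  have hcard : Nat.card Gal(K/k) = 2 := by
    rw [IsGalois.card_aut_eq_finrank, finrank_eq_two]
  obtain ⟨_, -, huniq⟩ := (Nat.card_eq_two_iff' 1).mp hcard
  by_contra! h
  exact h.2 ((huniq τ h.1).trans (huniq σ hσ).symm)

theorem Algebra.IsQuadraticExtension.apply_eq_self_iff (hσ : σ ≠ 1) (x : K) :
    σ x = x ↔ x ∈ Set.range (algebraMap k K) := by
  refine ⟨fun hx ↦ (IsGalois.mem_range_algebraMap_iff_fixed x).mpr fun τ ↦ ?_, ?_⟩
  · rcases eq_one_or_eq_of_ne_one hσ τ with rfl | rfl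
    · rfl
    · exact hx
  · rintro ⟨y, rfl⟩
    exact σ.commutes y

theorem Algebra.IsQuadraticExtension.isConj (hσ : σ ≠ 1) {φ : K →+* ℂ}
    (hk : IsReal (φ.comp (algebraMap k K))) (hφ : ¬ IsReal φ) : IsConj φ σ := by
  obtain ⟨τ, hτ⟩ := exists_comp_symm_eq_of_comp_eq φ (conjugate φ) hk.symm
  have hconj : IsConj φ τ.symm := hτ.symm
  rcases eq_one_or_eq_of_ne_one hσ τ.symm with h | h
  · exact absurd (h ▸ hconj) (by rwa [isConj_one_iff])
  · exact h ▸ hconj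

end Quadratic

theorem NumberField.ComplexEmbedding.isReal_iff_forall_im_eq_zero {K : Type*} [Field K]
    {φ : K →+* ℂ} : IsReal φ ↔ ∀ x, (φ x).im = 0 := by
  simp [isReal_iff, RingHom.ext_iff, Complex.conj_eq_iff_im]

theorem NumberField.Units.mul_inv_map_mem_torsion {k K : Type*} [Field k] [Field K]
    [NumberField K] [Algebra k K] {σ : Gal(K/k)} (hσ : ∀ φ : K →+* ℂ, IsConj φ σ)
    (u : (𝓞 K)ˣ) :
    u * (Units.map (RingOfIntegers.mapRingHom (σ : K →+* K)) u)⁻¹ ∈ torsion K := by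
  refine (mem_torsion K).mpr fun w ↦ ?_
  rw [← w.mk_embedding, InfinitePlace.apply]
  simp [(hσ _).eq]

theorem NumberField.Units.exists_algebraMap_eq_of_mem_range {k K : Type*} [Field k]
    [NumberField k] [Field K] [NumberField K] [Algebra k K] (u : (𝓞 K)ˣ)
    (hu : (u : K) ∈ Set.range (algebraMap k K)) :
    ∃ v : (𝓞 k)ˣ, algebraMap k K (algebraMap (𝓞 k) k v) = u := by
  obtain ⟨y, hy⟩ := hu
  have hint : IsIntegral ℤ y := by
    rw [← isIntegral_algebraMap_iff (algebraMap k K).injective, hy]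
    exact RingOfIntegers.isIntegral_coe _
  have hunit : IsUnit (⟨y, hint⟩ : 𝓞 k) := by
    apply IsUnit.of_map (algebraMap (𝓞 k) (𝓞 K))
    rw [show algebraMap (𝓞 k) (𝓞 K) ⟨y, hint⟩ = u from RingOfIntegers.ext hy]
    exact u.isUnit
  exact ⟨hunit.unit, hy⟩

theorem NumberField.Units.exists_sq_eq_and_adjoin_eq_top_of_apply_eq_neg {k K : Type*}
    [Field k] [NumberField k] [Field K] [NumberField K] [Algebra k K]
    [Algebra.IsQuadraticExtension k K] {σ : Gal(K/k)} (hσ : σ ≠ 1) {t : (𝓞 K)ˣ}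
    (ht : σ t = -(t : K)) :
    ∃ (ε : (𝓞 k)ˣ) (x : K),
      x ^ 2 = algebraMap k K (algebraMap (𝓞 k) k ε) ∧ Algebra.adjoin k {x} = ⊤ := by
  have hsq : ((t ^ 2 : (𝓞 K)ˣ) : K) ∈ Set.range (algebraMap k K) := by
    rw [← Algebra.IsQuadraticExtension.apply_eq_self_iff hσ]
    simp [ht]
  obtain ⟨ε, hε⟩ := exists_algebraMap_eq_of_mem_range _ hsq
  refine ⟨ε, t, by simp [hε], Algebra.IsQuadraticExtension.adjoin_singleton_eq_top ?_⟩
  rw [← Algebra.IsQuadraticExtension.apply_eq_self_iff hσ, ht, CharZero.neg_eq_self_iff]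
  simp

theorem cm_field_from_unit_square_root_general
    (Kp K : Type*) [Field Kp] [NumberField Kp] [Field K] [NumberField K] [Algebra Kp K]
    (htotreal : ∀ (phi : Kp →+* ℂ) (x : Kp), (phi x).im = 0)
    (htotimag : ∀ phi : K →+* ℂ, ∃ x : K, (phi x).im ≠ 0)
    (hdeg : Module.finrank Kp K = 2)
    (conj : K ≃ₐ[Kp] K)
    (hconj_ne : conj ≠ AlgEquiv.refl)
    (u : (𝓞 K)ˣ)
    (hu : ¬ ∃ v : (𝓞 Kp)ˣ,
      algebraMap (𝓞 K) K (u : 𝓞 K) * conj (algebraMap (𝓞 K) K (u : 𝓞 K))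
        = algebraMap Kp K ((algebraMap (𝓞 Kp) Kp (v : 𝓞 Kp)) ^ 2)) :
    ∃ (ε : (𝓞 Kp)ˣ) (x : K),
      x ^ 2 = algebraMap Kp K (algebraMap (𝓞 Kp) Kp (ε : 𝓞 Kp)) ∧
      Algebra.adjoin Kp ({x} : Set K) = ⊤ := by
  have : Algebra.IsQuadraticExtension Kp K := { finrank_eq_two' := hdeg }
  have hconj (φ : K →+* ℂ) : IsConj φ conj :=
    Algebra.IsQuadraticExtension.isConj hconj_ne
      (isReal_iff_forall_im_eq_zero.mpr (htotreal _))
      (fun h ↦ (htotimag φ).elim fun x hx ↦ hx (isReal_iff_forall_im_eq_zero.mp h x))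
  have hinv : Function.Involutive (RingOfIntegers.mapRingHom (conj : K →+* K)) :=
    fun x ↦ RingOfIntegers.ext (isConj_apply_apply (hconj (Classical.arbitrary _)) x)
  rcases Units.exists_map_eq_neg_or_mul_map_eq_sq hinv u
      ((CommGroup.mem_torsion _).mp (mul_inv_map_mem_torsion hconj u)) with
    ⟨t, ht⟩ | ⟨e, he, hue⟩
  · exact exists_sq_eq_and_adjoin_eq_top_of_apply_eq_neg hconj_ne
      (congrArg (algebraMap (𝓞 K) K) ht |>.trans (map_neg _ _))
  · obtain ⟨v, hv⟩ := exists_algebraMap_eq_of_mem_range e <|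
      (Algebra.IsQuadraticExtension.apply_eq_self_iff hconj_ne _).mp
        (congrArg (algebraMap (𝓞 K) K) he)
    exact absurd ⟨v, by rw [map_pow, hv]; exact congrArg (algebraMap (𝓞 K) K) hue⟩ hu

/-- Let `K` be a CM field with maximal totally real subfield `Kp`. If there
is a unit `u` of `𝓞 K` such that `u·ū` is not the square of a unit of `𝓞 Kp`, then `K` is
obtained from `Kp` by adjoining the square root of a unit: there are a unit `ε` of `𝓞 Kp`
and an `x ∈ K` with `x² = ε` and `K = Kp(x)`. -/
theorem cm_field_from_unit_square_root
    (Kp K : Type*) [Field Kp] [NumberField Kp] [Field K] [NumberField K] [Algebra Kp K]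
    (htotreal : ∀ (phi : Kp →+* ℂ) (x : Kp), (phi x).im = 0)
    (htotimag : ∀ phi : K →+* ℂ, ∃ x : K, (phi x).im ≠ 0)
    (hdeg : Module.finrank Kp K = 2)
    (conj : K ≃ₐ[Kp] K)
    (hconj_ne : conj ≠ AlgEquiv.refl)
    (hconj_inv : ∀ x, conj (conj x) = x)
    (hfix : ∀ x : K, conj x = x ↔ x ∈ (algebraMap Kp K).range)
    (u : (𝓞 K)ˣ)
    (hu : ¬ ∃ v : (𝓞 Kp)ˣ,
      algebraMap (𝓞 K) K (u : 𝓞 K) * conj (algebraMap (𝓞 K) K (u : 𝓞 K))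
        = algebraMap Kp K ((algebraMap (𝓞 Kp) Kp (v : 𝓞 Kp)) ^ 2)) :
    ∃ (ε : (𝓞 Kp)ˣ) (x : K),
      x ^ 2 = algebraMap Kp K (algebraMap (𝓞 Kp) Kp (ε : 𝓞 Kp)) ∧
      Algebra.adjoin Kp ({x} : Set K) = ⊤ :=
  cm_field_from_unit_square_root_general Kp K htotreal htotimag hdeg conj hconj_ne u hu
end

section
/- Let K be a CM field of degree 2n over ℚ, let q be a positive integer, and let π be an algebraic integer with K = ℚ(π) and π·π̄ = q. Let Δ_R be the discriminant of the order R = ℤ[π, π̄] and Δ_{R⁺} the discriminant of R⁺ = ℤ[π + π̄]. Then |Δ_R| = |N_{K/ℚ}(π − π̄)| · Δ_{R⁺}². -/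
/-!
Put `K⁺ = ℚ(π + π̄)`. Complex conjugation fixes `K⁺` but moves `π`, and `π` is a root of
`X² - (π + π̄) X + q` over `K⁺`; so `{1, π}` is a `K⁺`-basis of `K`, and `R = R⁺ ⊕ R⁺ π`. The products
of a `ℤ`-basis of `R⁺` with `{1, π}` therefore form a `ℤ`-basis of `R`, and the tower formula
`disc (c ⊗ e) = disc c ^ [K : K⁺] · N_{K⁺/ℚ} (disc_{K/K⁺} e)` gives
`Δ_R = Δ_{R⁺}² · N_{K⁺/ℚ} ((π - π̄)²)`. Finally `N_{K/K⁺} (π - π̄) = -(π - π̄)²`, so by transitivity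
of the norm `N_{K/ℚ} (π - π̄)` agrees with `N_{K⁺/ℚ} ((π - π̄)²)` up to sign.
-/

open Module Polynomial IntermediateField Submodule Set Matrix
open scoped Pointwise

theorem Algebra.traceMatrix_smulTower {R S T : Type*} [CommRing R] [CommRing S] [CommRing T]
    [Algebra R S] [Algebra S T] [Algebra R T] [IsScalarTower R S T]
    {ι κ : Type*} [Fintype ι] [DecidableEq ι] [Fintype κ] [DecidableEq κ]
    (b : Basis ι R S) (c : Basis κ S T) :
    (traceMatrix R (b.smulTower c)).reindex (Equiv.prodComm ι κ) (Equiv.prodComm ι κ) =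
      kroneckerMap (· * ·) 1 (traceMatrix R b) *
        comp κ κ ι ι R ((traceMatrix S c).map (leftMulMatrix b)) := by
  ext ⟨u, i⟩ ⟨v, j⟩
  simp only [reindex_apply, submatrix_apply, Equiv.prodComm_symm, Equiv.prodComm_apply,
    Prod.swap_prod_mk, traceMatrix_apply, traceForm_apply, mul_apply, Fintype.sum_prod_type_right,
    kroneckerMap_apply, one_apply, comp_apply, map_apply, Basis.smulTower_apply, ite_mul, one_mul,
    zero_mul, Finset.sum_ite_eq, Finset.mem_univ, if_true, leftMulMatrix_eq_repr_mul]
  rw [← trace_trace_of_basis b c, smul_mul_smul_comm, map_smul, smul_eq_mul, mul_assoc,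
    mul_comm (b j)]
  conv_lhs => rw [← b.sum_repr (trace S T (c u * c v) * b j)]
  simp only [Finset.mul_sum, map_sum, mul_smul_comm, map_smul, smul_eq_mul, mul_comm]

theorem Algebra.discr_smulTower {R S T : Type*} [CommRing R] [CommRing S] [CommRing T]
    [Algebra R S] [Algebra S T] [Algebra R T] [IsScalarTower R S T]
    {ι κ : Type*} [Fintype ι] [DecidableEq ι] [Fintype κ] [DecidableEq κ]
    (b : Basis ι R S) (c : Basis κ S T) :
    discr R (b.smulTower c) = discr R b ^ Fintype.card κ * norm R (discr S c) := by
  rw [discr_def, ← det_reindex_self (Equiv.prodComm ι κ), traceMatrix_smulTower, det_mul,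
    det_kronecker, det_one, one_pow, one_mul, norm_eq_matrix_det b, discr_def S]
  exact congrArg _ (det_det (traceMatrix S c) (leftMulMatrix b).toRingHom).symm

section Quadratic

variable {F L : Type*} [CommRing F] [CommRing L] [Algebra F L] {x : L} {t q : F}
  (b : Basis (Fin 2) F L) (hb : ⇑b = ![1, x]) (hx : x ^ 2 = t • x - q • 1)
include hb hx

theorem Algebra.leftMulMatrix_of_sq_eq : leftMulMatrix b x = !![0, -q; 1, t] := by
  have h1 : x = b 1 := by simp [hb]
  have hx0 : b 1 * b 0 = b 1 := by simp [hb]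
  have hx1 : b 1 * b 1 = t • b 1 - q • b 0 := by simp [hb, ← sq, hx]
  ext i j
  fin_cases i <;> fin_cases j <;> simp [leftMulMatrix_eq_repr_mul, h1, hx0, hx1]

theorem Algebra.traceMatrix_of_sq_eq : traceMatrix F b = !![2, t; t, t ^ 2 - 2 * q] := by
  ext i j
  fin_cases i <;> fin_cases j <;>
    simp [traceMatrix_apply, trace_eq_matrix_trace b, hb, leftMulMatrix_of_sq_eq b hb hx]
  ring

theorem Algebra.discr_of_sq_eq : discr F b = t ^ 2 - 4 * q := by
  rw [discr_def, traceMatrix_of_sq_eq b hb hx, det_fin_two_of]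
  ring

theorem Algebra.norm_sub_eq_neg_discr_of_sq_eq {x' : L} (hx' : x + x' = algebraMap F L t) :
    norm F (x - x') = -discr F b := by
  have hM : leftMulMatrix b (x - x') = !![-t, -2 * q; 2, t] := by
    rw [show x - x' = 2 * x - algebraMap F L t by rw [← hx']; ring, map_sub, map_mul, map_ofNat,
      two_mul, AlgHom.commutes, leftMulMatrix_of_sq_eq b hb hx]
    ext i j
    fin_cases i <;> fin_cases j <;> simp [Matrix.algebraMap_eq_diagonal] <;> ring
  rw [norm_eq_matrix_det b, hM, det_fin_two_of, discr_of_sq_eq b hb hx]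
  ring

end Quadratic

theorem Algebra.abs_norm_neg {R S : Type*} [CommRing R] [LinearOrder R] [IsOrderedRing R]
    [CommRing S] [Algebra R S] [Module.Free R S] (x : S) : |norm R (-x)| = |norm R x| := by
  rw [neg_eq_neg_one_mul, map_mul, show (-1 : S) = algebraMap R S (-1) by simp,
    Algebra.norm_algebraMap, abs_mul, abs_neg_one_pow, one_mul]

theorem Algebra.discr_eq_discr_of_span_int_eq {K : Type*} [Field K] [NumberField K]
    {ι ι' : Type*} [Fintype ι] [DecidableEq ι] [Fintype ι'] [DecidableEq ι']
    {b : Basis ι ℚ K} {b' : Basis ι' ℚ K} (h : span ℤ (range b) = span ℤ (range b')) :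
    discr ℚ b = discr ℚ b' := by
  refine discr_eq_discr_of_toMatrix_coeff_isIntegral K (fun i j => ?_) (fun i j => ?_)
  · obtain ⟨r, hr⟩ := (b.mem_span_iff_repr_mem ℤ (b' j)).1 (h ▸ subset_span ⟨j, rfl⟩) i
    rw [Basis.toMatrix_apply, ← hr]
    exact isIntegral_algebraMap
  · obtain ⟨r, hr⟩ := (b'.mem_span_iff_repr_mem ℤ (b j)).1 (h ▸ subset_span ⟨j, rfl⟩) i
    rw [Basis.toMatrix_apply, ← hr]
    exact isIntegral_algebraMap

theorem LinearIndependent.exists_basis_rat_coe_eq {V ι : Type*} [AddCommGroup V] [Module ℚ V]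
    [FiniteDimensional ℚ V] [Fintype ι] {v : ι → V} (hv : LinearIndependent ℤ v)
    (hcard : Fintype.card ι = finrank ℚ V) : ∃ B : Basis ι ℚ V, ⇑B = v :=
  ⟨basisOfLinearIndependentOfCardEqFinrank' v ((LinearIndependent.iff_fractionRing ℤ ℚ).1 hv) hcard,
    coe_basisOfLinearIndependentOfCardEqFinrank' ..⟩

theorem AlgHom.apply_eq_self_of_mem_adjoin_simple {F E : Type*} [Field F] [Field E] [Algebra F E]
    (σ : E →ₐ[F] E) {α x : E} (hα : σ α = α) (hx : x ∈ F⟮α⟯) : σ x = x := by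
  have h : σ.comp F⟮α⟯.val = F⟮α⟯.val := adjoin_algHom_ext F (by rintro _ rfl; exact hα)
  exact DFunLike.congr_fun h ⟨x, hx⟩

theorem AlgEquiv.notMem_range_algebraMap_adjoin_add {F K : Type*} [Field F] [Field K]
    [Algebra F K] (σ : K ≃ₐ[F] K) (hσ : σ ≠ AlgEquiv.refl) (hσσ : ∀ x, σ (σ x) = x) {x : K}
    (hgen : Algebra.adjoin F {x} = ⊤) : x ∉ (algebraMap F⟮x + σ x⟯ K).range := by
  rintro ⟨y, hy⟩
  have hfix : σ y = y :=
    AlgHom.apply_eq_self_of_mem_adjoin_simple (σ : K →ₐ[F] K) (by simp [hσσ, add_comm]) y.2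
  refine hσ (coe_toAlgHom_injective (AlgHom.ext_of_adjoin_eq_top hgen ?_))
  rintro _ rfl
  simpa [← hy] using hfix

theorem IntermediateField.exists_basis_eq_pair_of_sq_eq {F L : Type*} [Field F] [Field L]
    [Algebra F L] {x : L} (hgen : F⟮x⟯ = ⊤) (hx : x ∉ (algebraMap F L).range) {t q : F}
    (hq : x ^ 2 = t • x - q • 1) : ∃ b : Basis (Fin 2) F L, ⇑b = ![1, x] := by
  have hmonic : (X ^ 2 - C t * X + C q).Monic := by monicity!
  have hroot : aeval x (X ^ 2 - C t * X + C q) = 0 := by simp [hq, Algebra.smul_def]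
  have hint : IsIntegral F x := ⟨_, hmonic, hroot⟩
  have hdeg : (minpoly F x).natDegree = 2 := by
    refine le_antisymm ?_ ((minpoly.two_le_natDegree_iff hint).2 hx)
    refine (natDegree_le_natDegree (minpoly.min F x hmonic hroot)).trans ?_
    compute_degree!
  have hrank : finrank F L = 2 := by
    rw [← finrank_top', ← hgen, adjoin.finrank hint, hdeg]
  have hli : LinearIndependent F ![1, x] :=
    (LinearIndependent.pair_iff' one_ne_zero).2 fun a ha =>
      hx ⟨a, by rwa [Algebra.algebraMap_eq_smul_one]⟩
  exact ⟨basisOfLinearIndependentOfCardEqFinrank hli (by simp [hrank]),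
    coe_basisOfLinearIndependentOfCardEqFinrank hli _⟩

theorem Subring.exists_eq_add_mul_of_mem_closure_pair {A : Type*} [CommRing A] {x y z : A}
    (hxy : x * y ∈ closure {x + y}) (hz : z ∈ closure {x, y}) :
    ∃ a ∈ closure {x + y}, ∃ b ∈ closure {x + y}, z = a + b * x := by
  have hs : x + y ∈ closure {x + y} := subset_closure rfl
  induction hz using closure_induction with
  | mem z hz =>
    rcases hz with hz | hz <;> subst z
    · exact ⟨0, zero_mem _, 1, one_mem _, by ring⟩
    · exact ⟨x + y, hs, -1, neg_mem (one_mem _), by ring⟩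
  | zero => exact ⟨0, zero_mem _, 0, zero_mem _, by ring⟩
  | one => exact ⟨1, one_mem _, 0, zero_mem _, by ring⟩
  | add _ _ _ _ h₁ h₂ =>
    obtain ⟨a, ha, b, hb, rfl⟩ := h₁
    obtain ⟨a', ha', b', hb', rfl⟩ := h₂
    exact ⟨a + a', add_mem ha ha', b + b', add_mem hb hb', by ring⟩
  | neg _ _ h =>
    obtain ⟨a, ha, b, hb, rfl⟩ := h
    exact ⟨-a, neg_mem ha, -b, neg_mem hb, by ring⟩
  | mul _ _ _ _ h₁ h₂ =>
    obtain ⟨a, ha, b, hb, rfl⟩ := h₁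
    obtain ⟨a', ha', b', hb', rfl⟩ := h₂
    -- `x ^ 2 = (x + y) * x - x * y`
    refine ⟨a * a' - b * b' * (x * y), sub_mem (mul_mem ha ha') (mul_mem (mul_mem hb hb') hxy),
      a * b' + a' * b + b * b' * (x + y),
      add_mem (add_mem (mul_mem ha hb') (mul_mem ha' hb)) (mul_mem (mul_mem hb hb') hs), by ring⟩

theorem IntermediateField.coe_span_int_smulTower_eq_closure_pair {F K : Type*} [Field F]
    [Field K] [Algebra F K] {E : IntermediateField F K} {x y : K}
    (hxy : x * y ∈ Subring.closure {x + y}) (hs : x + y ∈ E) {ι : Type*} {c : Basis ι F E}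
    (hcmem : ∀ i, (c i : K) ∈ Subring.closure {x + y})
    (hcspan : ∀ a : E, (a : K) ∈ Subring.closure {x + y} → a ∈ span ℤ (range c))
    {e : Basis (Fin 2) E K} (he : ⇑e = ![1, x]) :
    (span ℤ (range (c.smulTower e)) : Set K) = Subring.closure {x, y} := by
  have hE : Subring.closure {x + y} ≤ E.toSubring := Subring.closure_le.2 (by simpa using hs)
  have hR : Subring.closure {x + y} ≤ Subring.closure {x, y} :=
    Subring.closure_le.2 (singleton_subset_iff.2
      (add_mem (Subring.subset_closure (by simp)) (Subring.subset_closure (by simp))))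
  have he' : ∀ u, e u ∈ Subring.closure {x, y} := by
    intro u
    fin_cases u
    · simp [he]
    · simpa [he] using Subring.subset_closure (mem_insert _ _)
  rw [show ⇑(c.smulTower e) = fun p => c p.1 • e p.2 from funext (c.smulTower_apply e),
    ← range_smul_range]
  ext z
  refine ⟨fun hz => ?_, fun hz => ?_⟩
  · induction hz using span_induction with
    | mem _ hz =>
      obtain ⟨_, ⟨i, rfl⟩, _, ⟨u, rfl⟩, rfl⟩ := hz
      exact mul_mem (hR (hcmem i)) (he' u)
    | zero => exact zero_mem _
    | add _ _ _ _ h₁ h₂ => exact add_mem h₁ h₂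
    | smul r _ _ h => exact zsmul_mem h r
  · obtain ⟨a, ha, b, hb, rfl⟩ := Subring.exists_eq_add_mul_of_mem_closure_pair hxy hz
    have key : ∀ a ∈ Subring.closure {x + y}, ∀ w ∈ range e, a * w ∈ span ℤ (range c • range e) :=
      fun a ha w hw => smul_mem_span_smul_of_mem (hcspan ⟨a, hE ha⟩ ha) hw
    exact add_mem (by simpa using key a ha 1 ⟨0, by simp [he]⟩) (key b hb x ⟨1, by simp [he]⟩)

theorem discriminant_of_minimal_order_general
    (n : ℕ)
    (K : Type*) [Field K] [NumberField K]
    (hdegQ : Module.finrank ℚ K = 2 * n)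
    (conj : K ≃ₐ[ℚ] K)
    (hconj_ne : conj ≠ AlgEquiv.refl)
    (hconj_inv : ∀ x, conj (conj x) = x)
    (q : ℕ)
    (π : K)
    (hgen : Algebra.adjoin ℚ ({π} : Set K) = ⊤)
    (hπq : π * conj π = (q : K))
    -- `b` is a `ℤ`-basis of `R = ℤ[π, π̄]`
    (b : Fin (2 * n) → K)
    (hbmem : ∀ i, b i ∈ Subring.closure {π, conj π})
    (hbli : LinearIndependent ℤ b)
    (hbspan : ∀ x ∈ Subring.closure {π, conj π}, x ∈ Submodule.span ℤ (Set.range b))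
    -- `c` is a `ℤ`-basis of `R⁺ = ℤ[π + π̄]`, viewed inside `K⁺ = ℚ⟮π + π̄⟯`
    (c : Fin n → ℚ⟮π + conj π⟯)
    (hcmem : ∀ i, (c i : K) ∈ Subring.closure {π + conj π})
    (hcli : LinearIndependent ℤ c)
    (hcspan : ∀ x : ℚ⟮π + conj π⟯,
      (x : K) ∈ Subring.closure {π + conj π} → x ∈ Submodule.span ℤ (Set.range c)) :
    |Algebra.discr ℚ b|
      = |Algebra.norm ℚ (π - conj π)| * (Algebra.discr ℚ c) ^ 2 := by
  have hsq : π ^ 2 = AdjoinSimple.gen ℚ (π + conj π) • π - (q : ℚ⟮π + conj π⟯) • 1 := by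
    rw [Algebra.smul_def, Algebra.smul_def, AdjoinSimple.algebraMap_gen, map_natCast]
    linear_combination -hπq
  obtain ⟨e, he⟩ := exists_basis_eq_pair_of_sq_eq
    (adjoin_eq_top_of_adjoin_eq_top ℚ (adjoin_eq_top_of_algebra ℚ _ hgen))
    (conj.notMem_range_algebraMap_adjoin_add hconj_ne hconj_inv hgen) hsq
  have hrank : finrank ℚ ℚ⟮π + conj π⟯ = n := by
    have := finrank_mul_finrank ℚ ℚ⟮π + conj π⟯ K
    rw [finrank_eq_card_basis e, hdegQ, Fintype.card_fin] at this
    omega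
  obtain ⟨bQ, rfl⟩ := hbli.exists_basis_rat_coe_eq (by simp [hdegQ])
  obtain ⟨cQ, rfl⟩ := hcli.exists_basis_rat_coe_eq (by simp [hrank])
  have hR := coe_span_int_smulTower_eq_closure_pair (hπq ▸ natCast_mem _ q)
    (mem_adjoin_simple_self ℚ _) hcmem hcspan he
  have hspan : span ℤ (range bQ) = span ℤ (range (cQ.smulTower e)) :=
    le_antisymm (span_le.2 (hR ▸ range_subset_iff.2 hbmem)) fun z hz =>
      hbspan z (by rwa [← SetLike.mem_coe, ← hR])
  have hnorm := Algebra.norm_sub_eq_neg_discr_of_sq_eq e he hsq (AdjoinSimple.algebraMap_gen ℚ _)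
  calc |Algebra.discr ℚ bQ| = |Algebra.discr ℚ (cQ.smulTower e)| := by
        rw [Algebra.discr_eq_discr_of_span_int_eq hspan]
    _ = |Algebra.norm ℚ (π - conj π)| * (Algebra.discr ℚ cQ) ^ 2 := by
        rw [Algebra.discr_smulTower, ← Algebra.norm_norm (S := ℚ⟮π + conj π⟯) (a := π - conj π),
          hnorm, Algebra.abs_norm_neg, Fintype.card_fin, abs_mul, abs_pow, sq_abs, mul_comm]

/-- Let `K` be a CM field of degree `2n` over `ℚ`, let `q` be a positive
integer, and let `π` be an algebraic integer with `K = ℚ(π)` and `π·π̄ = q`.  Let `Δ_R` be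
the discriminant of the order `R = ℤ[π, π̄]` (the discriminant of any `ℤ`-basis `b` of `R`
with respect to the trace form of `K/ℚ`) and `Δ_{R⁺}` that of `R⁺ = ℤ[π + π̄]` (computed in
`K⁺ = ℚ(π + π̄)`).  Then `|Δ_R| = |N_{K/ℚ}(π − π̄)|·Δ_{R⁺}²`. -/
theorem discriminant_of_minimal_order
    (n : ℕ) (hn : 0 < n)
    (K : Type*) [Field K] [NumberField K]
    (hdegQ : Module.finrank ℚ K = 2 * n)
    (conj : K ≃ₐ[ℚ] K)
    (hconj_ne : conj ≠ AlgEquiv.refl)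
    (hconj_inv : ∀ x, conj (conj x) = x)
    (hstar : ∀ (phi : K →+* ℂ) (x : K), phi (conj x) = (starRingEnd ℂ) (phi x))
    (q : ℕ) (hq : 0 < q)
    (π : K) (hπint : IsIntegral ℤ π)
    (hgen : Algebra.adjoin ℚ ({π} : Set K) = ⊤)
    (hπq : π * conj π = (q : K))
    -- `b` is a `ℤ`-basis of `R = ℤ[π, π̄]`
    (b : Fin (2 * n) → K)
    (hbmem : ∀ i, b i ∈ Subring.closure {π, conj π})
    (hbli : LinearIndependent ℤ b)
    (hbspan : ∀ x ∈ Subring.closure {π, conj π}, x ∈ Submodule.span ℤ (Set.range b))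
    -- `c` is a `ℤ`-basis of `R⁺ = ℤ[π + π̄]`, viewed inside `K⁺ = ℚ⟮π + π̄⟯`
    (c : Fin n → ℚ⟮π + conj π⟯)
    (hcmem : ∀ i, (c i : K) ∈ Subring.closure {π + conj π})
    (hcli : LinearIndependent ℤ c)
    (hcspan : ∀ x : ℚ⟮π + conj π⟯,
      (x : K) ∈ Subring.closure {π + conj π} → x ∈ Submodule.span ℤ (Set.range c)) :
    |Algebra.discr ℚ b|
      = |Algebra.norm ℚ (π - conj π)| * (Algebra.discr ℚ c) ^ 2 :=
  discriminant_of_minimal_order_general n K hdegQ conj hconj_ne hconj_inv q π hgen hπq b hbmem hbli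
    hbspan c hcmem hcli hcspan
end

section
/- Let F be a positive integer and let χ be a function assigning to each prime p dividing F a value χ(p) ∈ {−1, 0, 1}. Then, as rational numbers, (F·∏_{p ∣ F} (1 − χ(p)/p)) / (∑_{f ∣ F} f·∏_{p ∣ f} (1 − χ(p)/p)) ≤ ∏_{p ∣ F} (p+1)/(p+2), where the sum is over the positive divisors f of F and the products are over the primes dividing f (respectively F). (Via the class number formula for imaginary quadratic orders, this says that the ratio h(Δ)/H(Δ) of the class number of the order of discriminant Δ = F²Δ₀ to the Kronecker class number H(Δ) = ∑_{f ∣ F} h(f²Δ₀) is at most ∏_{p ∣ F} (p+1)/(p+2).) -/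
/-!
Writing `g f = f ∏_{p ∣ f} (1 - χ(p)/p)`, the function `g` is multiplicative, hence so is
`ζ * g`, and the ratio `g F / (ζ * g) F` splits into a product of local factors
`g (p^e) / ∑_{k ≤ e} g (p^k)`. With `c = 1 - χ(p)/p` and `T = 1 + p + ⋯ + p^(e-1)`, so that
`p^e = (p-1)T + 1`, the local factor is `c p^e / (1 + c p T)`, and
`(p+1)(1 + c p T) - (p+2) c p^e = (p+1) - (p+2)c + 2cT ≥ (p+1) - p c = 1 + χ(p) ≥ 0`.
-/

open Finset ArithmeticFunction
open scoped ArithmeticFunction.zeta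

theorem ArithmeticFunction.IsMultiplicative.div_coe_zeta_mul_apply {K : Type*} [Field K]
    {f : ArithmeticFunction K} (hf : f.IsMultiplicative) {n : ℕ} (hn : n ≠ 0) :
    f n / ((ζ : ArithmeticFunction K) * f) n =
      ∏ p ∈ n.primeFactors,
        f (p ^ n.factorization p) / ∑ k ∈ range (n.factorization p + 1), f (p ^ k) := by
  have hratio := multiplicative_factorization _
    (hf.pdiv (isMultiplicative_zeta.natCast.mul hf)) hn
  rw [pdiv_apply] at hratio
  rw [hratio, Finsupp.prod, Nat.support_factorization]
  refine prod_congr rfl fun p hp => ?_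
  rw [pdiv_apply, coe_zeta_mul_apply, Nat.sum_divisors_prime_pow (Nat.prime_of_mem_primeFactors hp)]

section LocalFactor

variable {K : Type*} [Field K] [LinearOrder K] [IsStrictOrderedRing K]

theorem pow_mul_div_one_add_geom_sum_mem_Icc {q c : K} {e : ℕ} (hq : 0 ≤ q) (hc : 0 ≤ c)
    (hqc : q * c ≤ q + 1) (he : e ≠ 0) :
    q ^ e * c / (1 + c * q * ∑ i ∈ range e, q ^ i) ∈ Set.Icc 0 ((q + 1) / (q + 2)) := by
  have hT : 1 ≤ ∑ i ∈ range e, q ^ i := by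
    simpa using single_le_sum (fun i _ => pow_nonneg hq i) (mem_range.2 (Nat.pos_of_ne_zero he))
  have hgeom : q ^ e = (q - 1) * ∑ i ∈ range e, q ^ i + 1 := by
    linear_combination (geom_sum_mul q e).symm
  refine ⟨by positivity, ?_⟩
  rw [div_le_div_iff₀ (by positivity) (by positivity), hgeom]
  nlinarith [mul_le_mul_of_nonneg_left hT hc]

end LocalFactor

/-- Up to the unit index, `classNumberFactor χ f = h(f²Δ₀) / h(Δ₀)` when `χ` is the
Kronecker symbol of `Δ₀`. -/
noncomputable def classNumberFactor (χ : ℕ → ℚ) : ArithmeticFunction ℚ :=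
  ⟨fun n => n * ∏ p ∈ n.primeFactors, (1 - χ p / p), by simp⟩

section ClassNumberFactor

variable (χ : ℕ → ℚ)

theorem classNumberFactor_apply (n : ℕ) :
    classNumberFactor χ n = n * ∏ p ∈ n.primeFactors, (1 - χ p / p) := rfl

theorem isMultiplicative_classNumberFactor : (classNumberFactor χ).IsMultiplicative := by
  refine IsMultiplicative.iff_ne_zero.mpr
    ⟨by simp [classNumberFactor_apply], fun {m n} _ _ hmn => ?_⟩
  simp only [classNumberFactor_apply]
  rw [hmn.primeFactors_mul, prod_union hmn.disjoint_primeFactors, Nat.cast_mul]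
  ring

variable {χ} {p : ℕ}

theorem classNumberFactor_prime_pow (hp : p.Prime) {k : ℕ} (hk : k ≠ 0) :
    classNumberFactor χ (p ^ k) = p ^ k * (1 - χ p / p) := by
  rw [classNumberFactor_apply, Nat.primeFactors_prime_pow hk hp, prod_singleton, Nat.cast_pow]

theorem sum_range_classNumberFactor_prime_pow (hp : p.Prime) (e : ℕ) :
    ∑ k ∈ range (e + 1), classNumberFactor χ (p ^ k) =
      1 + (1 - χ p / p) * p * ∑ i ∈ range e, (p : ℚ) ^ i := by
  rw [sum_range_succ', pow_zero, (isMultiplicative_classNumberFactor χ).map_one, add_comm,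
    mul_sum]
  congr 1
  refine sum_congr rfl fun i _ => ?_
  rw [classNumberFactor_prime_pow hp i.succ_ne_zero, pow_succ]
  ring

theorem classNumberFactor_prime_pow_div_sum_mem_Icc (hp : p.Prime)
    (hχ : -1 ≤ χ p ∧ χ p ≤ 1) {e : ℕ} (he : e ≠ 0) :
    classNumberFactor χ (p ^ e) / ∑ k ∈ range (e + 1), classNumberFactor χ (p ^ k) ∈
      Set.Icc 0 (((p : ℚ) + 1) / ((p : ℚ) + 2)) := by
  have hp0 : (0 : ℚ) < p := by exact_mod_cast hp.pos
  have hp1 : (1 : ℚ) ≤ p := by exact_mod_cast hp.one_lt.le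
  rw [classNumberFactor_prime_pow hp he, sum_range_classNumberFactor_prime_pow hp]
  refine pow_mul_div_one_add_geom_sum_mem_Icc hp0.le ?_ ?_ he
  · rw [sub_nonneg, div_le_one hp0]
    linarith
  · rw [mul_sub, mul_div_cancel₀ _ hp0.ne']
    linarith

end ClassNumberFactor

/-- Let `F` be a positive integer and let `χ` assign to each prime `p`
dividing `F` a value in `{−1, 0, 1}`.  Then
`(F·∏_{p∣F}(1 − χ(p)/p)) / (∑_{f∣F} f·∏_{p∣f}(1 − χ(p)/p)) ≤ ∏_{p∣F} (p+1)/(p+2)`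
as rational numbers.  (Via the class number formula for imaginary quadratic orders, this is
the bound `h(Δ)/H(Δ) ≤ ∏_{p∣F} (p+1)/(p+2)` on the ratio of the class number of the order
of discriminant `Δ = F²Δ₀` to the Kronecker class number.) -/
theorem class_number_ratio_bound
    (F : ℕ) (hF : 0 < F)
    (χ : ℕ → ℚ)
    (hχ : ∀ p ∈ F.primeFactors, χ p = -1 ∨ χ p = 0 ∨ χ p = 1) :
    ((F : ℚ) * ∏ p ∈ F.primeFactors, (1 - χ p / (p : ℚ)))
        / (∑ f ∈ F.divisors, (f : ℚ) * ∏ p ∈ f.primeFactors, (1 - χ p / (p : ℚ)))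
      ≤ ∏ p ∈ F.primeFactors, (((p : ℚ) + 1) / ((p : ℚ) + 2)) := by
  have hχ_bounds (p : ℕ) (hp : p ∈ F.primeFactors) : -1 ≤ χ p ∧ χ p ≤ 1 := by
    rcases hχ p hp with h | h | h <;> norm_num [h]
  have hlocal (p : ℕ) (hp : p ∈ F.primeFactors) :=
    classNumberFactor_prime_pow_div_sum_mem_Icc (Nat.prime_of_mem_primeFactors hp)
      (hχ_bounds p hp) (Finsupp.mem_support_iff.mp (by rwa [Nat.support_factorization]))
  calc _ = classNumberFactor χ F / ((ζ : ArithmeticFunction ℚ) * classNumberFactor χ) F := by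
        rw [coe_zeta_mul_apply]; rfl
    _ = _ := (isMultiplicative_classNumberFactor χ).div_coe_zeta_mul_apply hF.ne'
    _ ≤ _ := prod_le_prod (fun p hp => (hlocal p hp).1) (fun p hp => (hlocal p hp).2)
end

section
/- Let p be a prime with p ≡ 7 (mod 8), let a be the largest integer with a < √p − 1, and let f = x⁴ − 2a x³ + (a² + p)x² − 2apx + p². Then f is irreducible over ℚ, and K = ℚ[x]/(f) is a CM field of degree 4 whose maximal totally real subfield is isomorphic to ℚ(√p); moreover the middle coefficient a² + p of f is coprime to p. -/
/-!
Write `r = √p`. Since `f = (x² - ax + p)² - p x² = (x² - (a + r)x + p)(x² - (a - r)x + p)` and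
`a² < p`, both quadratic factors have negative discriminant for either sign of `r`, so `f` has no
real root and every field containing a root `π` of `f` is totally complex. Such a field contains
the square root `(π² - aπ + p)/π` of `p`, which is totally real, so `ℚ(√p)` is a proper subfield
of degree 2 and the field has degree at least 4. Hence `f` is irreducible, and `ℚ[x]/(f)` is a
totally complex quadratic extension of the totally real field `ℚ(√p)`: a CM field whose maximal
totally real subfield is `ℚ(√p)`. The coprimality only needs `p ∤ a`, which holds as `0 < a < p`.
-/

open Polynomial

noncomputable section

/-- The data exhibiting `ℚ[x]/(f)` as a CM field of degree 4 whose maximal totally real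
subfield is `ℚ(√p)`: a number field `K` of degree 4 generated by a root `π` of `f`, with
complex conjugation `conj` (a nontrivial involution commuting with complex conjugation
under every complex embedding, so that `K` is CM), and a square root `s` of `p` in `K`
fixed by `conj` whose fixed field — the maximal totally real subfield — is exactly
`ℚ(s) ≅ ℚ(√p)`. -/
structure DegFourCMWitness (p : ℕ) (f : ℚ[X]) where
  K : Type
  [fieldK : Field K]
  [nfK : NumberField K]
  /-- `K = ℚ[x]/(f)`: it is generated by a root `π` of `f`. -/
  π : K
  hroot : Polynomial.aeval π f = 0
  hgen : Algebra.adjoin ℚ ({π} : Set K) = ⊤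
  /-- `K` has degree 4 over `ℚ`. -/
  hdeg : Module.finrank ℚ K = 4
  /-- `K` is a CM field, with complex conjugation `conj`. -/
  conj : K ≃ₐ[ℚ] K
  hconj_ne : conj ≠ AlgEquiv.refl
  hconj_inv : ∀ x, conj (conj x) = x
  hstar : ∀ (phi : K →+* ℂ) (x : K), phi (conj x) = (starRingEnd ℂ) (phi x)
  /-- the maximal totally real subfield of `K` (the fixed field of `conj`)
  is `ℚ(s)` for a square root `s` of `p`, hence is isomorphic to `ℚ(√p)`. -/
  s : K
  hs_fixed : conj s = s
  hs_sq : s ^ 2 = (p : K)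
  hs_gen : ∀ x : K, conj x = x → x ∈ Algebra.adjoin ℚ ({s} : Set K)

open NumberField IntermediateField

theorem Int.gcd_pow_add_self_eq_one {p : ℕ} (hp : p.Prime) {a : ℤ} (hpa : ¬(p : ℤ) ∣ a) (k : ℕ) :
    Int.gcd (a ^ k + p) p = 1 := by
  rw [Int.gcd_add_self_left, ← Int.isCoprime_iff_gcd_eq_one]
  exact ((Nat.prime_iff_prime_int.mp hp).coprime_iff_not_dvd.mpr hpa).symm.pow_left

open ComplexConjugate in
theorem Complex.conj_eq_self_of_sq_eq_ofReal {z : ℂ} {c : ℝ} (hc : 0 ≤ c) (hz : z ^ 2 = c) :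
    conj z = z := by
  have hsq : (Real.sqrt c : ℂ) ^ 2 = c := by exact_mod_cast Real.sq_sqrt hc
  have : (z - Real.sqrt c) * (z + Real.sqrt c) = 0 := by linear_combination hz - hsq
  rcases mul_eq_zero.mp this with h | h
  · rw [sub_eq_zero.mp h, Complex.conj_ofReal]
  · rw [eq_neg_of_add_eq_zero_left h, map_neg, Complex.conj_ofReal]

-- The number-field API uses the `ℚ`-algebra structure `DivisionRing.toRatAlgebra` of the field
-- `AdjoinRoot f`, which is not definitionally `AdjoinRoot.instAlgebra`.
theorem AdjoinRoot.aeval_root_self_rat (f : ℚ[X]) [Fact (Irreducible f)] :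
    aeval (AdjoinRoot.root f) f = 0 := by
  rw [aeval_def, Subsingleton.elim (algebraMap ℚ _) (AdjoinRoot.of f)]
  exact AdjoinRoot.eval₂_root f

theorem AdjoinRoot.adjoin_root_eq_top_rat (f : ℚ[X]) [Fact (Irreducible f)] :
    Algebra.adjoin ℚ {AdjoinRoot.root f} = ⊤ := by
  have := AdjoinRoot.adjoinRoot_eq_top (f := f)
  rwa [Subsingleton.elim (AdjoinRoot.instAlgebra f) DivisionRing.toRatAlgebra] at this

theorem AdjoinRoot.finrank_rat (f : ℚ[X]) [Fact (Irreducible f)] :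
    Module.finrank ℚ (AdjoinRoot f) = f.natDegree :=
  (AdjoinRoot.powerBasis (Fact.out : Irreducible f).ne_zero).finrank

namespace NumberField

variable {K : Type*} [Field K] {s : K} {p : ℚ}

theorem mem_maximalRealSubfield_of_sq_eq (hp : 0 ≤ p) (hs : s ^ 2 = p) :
    s ∈ maximalRealSubfield K := fun φ =>
  Complex.conj_eq_self_of_sq_eq_ofReal (c := p) (by exact_mod_cast hp)
    (by rw [← map_pow, hs, map_ratCast, Complex.ofReal_ratCast])

variable [CharZero K]

theorem adjoin_le_maximalRealSubfield_of_sq_eq (hp : 0 ≤ p) (hs : s ^ 2 = p) :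
    ℚ⟮s⟯.toSubfield ≤ maximalRealSubfield K :=
  adjoin_simple_le_iff (K := (maximalRealSubfield K).toIntermediateField
    fun q => SubfieldClass.ratCast_mem _ q) |>.mpr (mem_maximalRealSubfield_of_sq_eq hp hs)

theorem finrank_adjoin_of_sq_eq (hp : ¬IsSquare p) (hs : s ^ 2 = p) :
    Module.finrank ℚ ℚ⟮s⟯ = 2 := by
  have hirr : Irreducible (X ^ 2 - C p) :=
    X_pow_sub_C_irreducible_of_prime Nat.prime_two fun b hb => hp ⟨b, by rw [← hb, sq]⟩
  have hroot : aeval s (X ^ 2 - C p) = 0 := by simp [hs]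
  have hmin : minpoly ℚ s = X ^ 2 - C p :=
    (minpoly.eq_of_irreducible_of_monic hirr hroot (by monicity!)).symm
  rw [adjoin.finrank ⟨_, by monicity!, hroot⟩, hmin]
  compute_degree!

variable [NumberField K]

theorem isTotallyReal_adjoin_of_sq_eq (hp : 0 ≤ p) (hs : s ^ 2 = p) :
    IsTotallyReal ℚ⟮s⟯ :=
  isTotallyReal_iff_le_maximalRealSubfield.mpr (adjoin_le_maximalRealSubfield_of_sq_eq hp hs)

theorem IsTotallyComplex.ne_top_of_isTotallyReal [IsTotallyComplex K]
    (F : IntermediateField ℚ K) [IsTotallyReal F] : F ≠ ⊤ := by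
  rintro rfl
  have : IsTotallyReal K := IsTotallyReal.ofRingEquiv (topEquiv (F := ℚ) (E := K)).toRingEquiv
  obtain ⟨φ⟩ := (inferInstance : Nonempty (K →+* ℂ))
  exact IsTotallyComplex.complexEmbedding_not_isReal φ (IsTotallyReal.complexEmbedding_isReal φ)

theorem four_le_finrank_of_sq_eq [IsTotallyComplex K] (hp0 : 0 ≤ p) (hp : ¬IsSquare p)
    (hs : s ^ 2 = p) : 4 ≤ Module.finrank ℚ K := by
  have := isTotallyReal_adjoin_of_sq_eq hp0 hs
  have h1 : Module.finrank ℚ⟮s⟯ K ≠ 1 :=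
    finrank_eq_one_iff_eq_top.not.mpr (IsTotallyComplex.ne_top_of_isTotallyReal ℚ⟮s⟯)
  have h0 : Module.finrank ℚ⟮s⟯ K ≠ 0 := Module.finrank_pos.ne'
  rw [← Module.finrank_mul_finrank ℚ ℚ⟮s⟯ K, finrank_adjoin_of_sq_eq hp hs]
  omega

theorem isQuadraticExtension_adjoin_of_sq_eq (hp : ¬IsSquare p) (hs : s ^ 2 = p)
    (hK : Module.finrank ℚ K = 4) : Algebra.IsQuadraticExtension ℚ⟮s⟯ K where
  finrank_eq_two' := by
    have := Module.finrank_mul_finrank ℚ ℚ⟮s⟯ K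
    rw [finrank_adjoin_of_sq_eq hp hs, hK] at this
    omega

theorem isCMField_of_sq_eq [IsTotallyComplex K] (hp0 : 0 ≤ p) (hp : ¬IsSquare p)
    (hs : s ^ 2 = p) (hK : Module.finrank ℚ K = 4) : IsCMField K :=
  have := isTotallyReal_adjoin_of_sq_eq hp0 hs
  have := isQuadraticExtension_adjoin_of_sq_eq hp hs hK
  IsCMField.ofCMExtension ℚ⟮s⟯ K

theorem maximalRealSubfield_eq_adjoin_of_sq_eq [IsTotallyComplex K] (hp0 : 0 ≤ p)
    (hp : ¬IsSquare p) (hs : s ^ 2 = p) (hK : Module.finrank ℚ K = 4) :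
    maximalRealSubfield K = ℚ⟮s⟯.toSubfield := by
  have := isTotallyReal_adjoin_of_sq_eq hp0 hs
  have := isQuadraticExtension_adjoin_of_sq_eq hp hs hK
  refine le_antisymm (fun x hx => ?_) (adjoin_le_maximalRealSubfield_of_sq_eq hp0 hs)
  obtain ⟨y, hy⟩ : ∃ y : ℚ⟮s⟯, (y : K) = x :=
    ⟨_, CMExtension.algebraMap_equivMaximalRealSubfield_symm_apply ℚ⟮s⟯ K ⟨x, hx⟩⟩
  exact hy ▸ y.2

end NumberField

def weilQuartic (a p : ℚ) : ℚ[X] :=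
  X ^ 4 - C (2 * a) * X ^ 3 + C (a ^ 2 + p) * X ^ 2 - C (2 * a * p) * X + C (p ^ 2)

namespace weilQuartic

variable {a p : ℚ}

theorem aeval_eq {A : Type*} [CommRing A] [Algebra ℚ A] (x : A) :
    aeval x (weilQuartic a p) =
      (x ^ 2 - algebraMap ℚ A a * x + algebraMap ℚ A p) ^ 2 - algebraMap ℚ A p * x ^ 2 := by
  simp only [weilQuartic, map_add, map_sub, map_mul, map_pow, aeval_X, aeval_C, map_ofNat]
  ring

theorem natDegree_eq : (weilQuartic a p).natDegree = 4 := by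
  unfold weilQuartic; compute_degree!

theorem aeval_real_pos (hap : a ^ 2 < p) (x : ℝ) : 0 < aeval x (weilQuartic a p) := by
  have hp : (0 : ℝ) < p := by exact_mod_cast (sq_nonneg a).trans_lt hap
  set r := Real.sqrt p
  have hr : r ^ 2 = p := Real.sq_sqrt hp.le
  obtain ⟨h1, h2⟩ := abs_lt_of_sq_lt_sq' (hr ▸ (by exact_mod_cast hap : (a : ℝ) ^ 2 < p))
    (Real.sqrt_nonneg _)
  rw [aeval_eq, eq_ratCast, eq_ratCast, ← hr]
  have factor : ((x ^ 2 - a * x + r ^ 2) ^ 2 - r ^ 2 * x ^ 2 : ℝ) =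
      (x ^ 2 - (a + r) * x + r ^ 2) * (x ^ 2 - (a - r) * x + r ^ 2) := by ring
  rw [factor]
  apply mul_pos
  · nlinarith [sq_nonneg (x - (a + r) / 2)]
  · nlinarith [sq_nonneg (x - (a - r) / 2)]

variable {K : Type*} [Field K] [CharZero K] {π : K}

theorem isTotallyComplex_of_aeval_eq_zero (hap : a ^ 2 < p)
    (hπ : aeval π (weilQuartic a p) = 0) : IsTotallyComplex K := by
  refine ⟨fun w => InfinitePlace.isComplex_iff.mpr fun hreal => ?_⟩
  set φ := w.embedding
  have hφπ : aeval (φ π) (weilQuartic a p) = 0 := by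
    rw [← φ.toRatAlgHom_apply, aeval_algHom_apply, hπ, map_zero]
  have hφπ_real : ((φ π).re : ℂ) = φ π :=
    Complex.conj_eq_iff_re.mp (RingHom.congr_fun hreal π)
  rw [← hφπ_real, ← Complex.coe_algebraMap, aeval_algebraMap_apply] at hφπ
  exact (aeval_real_pos hap _).ne' ((map_eq_zero_iff _ (algebraMap ℝ ℂ).injective).mp hφπ)

theorem exists_sq_eq_of_aeval_eq_zero (hap : a ^ 2 < p) (hπ : aeval π (weilQuartic a p) = 0) :
    ∃ s : K, s ^ 2 = p := by
  rw [aeval_eq, eq_ratCast, eq_ratCast, sub_eq_zero] at hπ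
  have hπ0 : π ≠ 0 := by
    rintro rfl
    have : (p : K) = 0 := by simpa using hπ
    exact ((sq_nonneg a).trans_lt hap).ne' (by exact_mod_cast this)
  exact ⟨(π ^ 2 - a * π + p) / π, by rw [div_pow, hπ]; field_simp⟩

theorem irreducible (hap : a ^ 2 < p) (hp : ¬IsSquare p) : Irreducible (weilQuartic a p) := by
  have hp0 : 0 ≤ p := (sq_nonneg a).trans hap.le
  obtain ⟨g, hg, hgf⟩ := exists_irreducible_of_natDegree_pos (natDegree_eq ▸ by norm_num :
    0 < (weilQuartic a p).natDegree)
  have := Fact.mk hg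
  have hroot := aeval_eq_zero_of_dvd_aeval_eq_zero hgf (AdjoinRoot.aeval_root_self_rat g)
  have := isTotallyComplex_of_aeval_eq_zero hap hroot
  obtain ⟨s, hs⟩ := exists_sq_eq_of_aeval_eq_zero hap hroot
  have hdeg := four_le_finrank_of_sq_eq hp0 hp hs
  rw [AdjoinRoot.finrank_rat] at hdeg
  have hf0 : weilQuartic a p ≠ 0 := ne_zero_of_natDegree_gt (n := 0) (natDegree_eq ▸ by norm_num)
  exact (associated_of_dvd_of_natDegree_le hgf hf0 (natDegree_eq ▸ hdeg)).irreducible hg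

end weilQuartic

theorem nonempty_degFourCMWitness_weilQuartic {a : ℚ} {p : ℕ} (hap : a ^ 2 < p)
    (hp : ¬IsSquare (p : ℚ)) :
    Nonempty (DegFourCMWitness p (weilQuartic a p)) := by
  have hp0 : (0 : ℚ) ≤ p := by positivity
  have := Fact.mk (weilQuartic.irreducible hap hp)
  let K := AdjoinRoot (weilQuartic a p)
  have hroot := AdjoinRoot.aeval_root_self_rat (weilQuartic a p)
  have hK : Module.finrank ℚ K = 4 := (AdjoinRoot.finrank_rat _).trans weilQuartic.natDegree_eq
  have := weilQuartic.isTotallyComplex_of_aeval_eq_zero hap hroot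
  obtain ⟨s, hs⟩ := weilQuartic.exists_sq_eq_of_aeval_eq_zero hap hroot
  have := isCMField_of_sq_eq hp0 hp hs hK
  have hKplus := maximalRealSubfield_eq_adjoin_of_sq_eq hp0 hp hs hK
  exact ⟨{
    K, π := AdjoinRoot.root _, hroot, hgen := AdjoinRoot.adjoin_root_eq_top_rat _, hdeg := hK,
    conj := (IsCMField.complexConj K).restrictScalars ℚ,
    hconj_ne := fun h => IsCMField.complexConj_ne_one K
      (AlgEquiv.restrictScalars_injective ℚ (h.trans rfl)),
    hconj_inv := IsCMField.complexConj_apply_apply K,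
    hstar := IsCMField.complexEmbedding_complexConj K,
    s,
    hs_fixed := (IsCMField.complexConj_eq_self_iff K s).mpr
      (hKplus ▸ mem_adjoin_simple_self ℚ s),
    hs_sq := by rw [hs, Rat.cast_natCast],
    hs_gen := fun x hx => by
      have hx' := (IsCMField.complexConj_eq_self_iff K x).mp hx
      rw [hKplus] at hx'
      rwa [← adjoin_simple_toSubalgebra_of_isAlgebraic (Algebra.IsAlgebraic.isAlgebraic s)] }⟩

/-- Let `p` be a prime with `p ≡ 7 (mod 8)`, let `a` be the largest
integer with `a < √p − 1`, and let `f = x⁴ − 2ax³ + (a² + p)x² − 2apx + p²`.  Then `f` is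
irreducible over `ℚ`, `ℚ[x]/(f)` is a CM field of degree 4 whose maximal totally real
subfield is isomorphic to `ℚ(√p)`, and the middle coefficient `a² + p` is coprime to `p`. -/
theorem weil_polynomial_family_is_CM
    (p : ℕ) (hp : p.Prime) (hp7 : p % 8 = 7)
    (a : ℤ) (ha1 : (a : ℝ) < Real.sqrt p - 1) (ha2 : Real.sqrt p - 1 ≤ (a : ℝ) + 1) :
    Irreducible (X ^ 4 - C (2 * (a : ℚ)) * X ^ 3 + C ((a : ℚ) ^ 2 + (p : ℚ)) * X ^ 2
        - C (2 * (a : ℚ) * (p : ℚ)) * X + C ((p : ℚ) ^ 2)) ∧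
    Nonempty (DegFourCMWitness p
      (X ^ 4 - C (2 * (a : ℚ)) * X ^ 3 + C ((a : ℚ) ^ 2 + (p : ℚ)) * X ^ 2
        - C (2 * (a : ℚ) * (p : ℚ)) * X + C ((p : ℚ) ^ 2))) ∧
    Int.gcd (a ^ 2 + (p : ℤ)) (p : ℤ) = 1 := by
  have hsqrt : (2 : ℝ) < Real.sqrt p := by
    rw [Real.lt_sqrt zero_le_two]
    exact_mod_cast (by omega : 2 ^ 2 < p)
  have ha0 : 0 < a := by exact_mod_cast (by linarith : (0 : ℝ) < a)
  have hap : (a : ℚ) ^ 2 < p := by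
    have h := sq_lt_sq' (by linarith) (by linarith : (a : ℝ) < Real.sqrt p)
    rw [Real.sq_sqrt (Nat.cast_nonneg p)] at h
    exact_mod_cast h
  have hp_sq : ¬IsSquare (p : ℚ) := Rat.isSquare_natCast_iff.not.mpr hp.prime.not_isSquare
  have hpa : ¬(p : ℤ) ∣ a := fun h => by
    nlinarith [Int.le_of_dvd ha0 h, (by exact_mod_cast hap : a ^ 2 < p)]
  exact ⟨weilQuartic.irreducible hap hp_sq, nonempty_degFourCMWitness_weilQuartic hap hp_sq,
    Int.gcd_pow_add_self_eq_one hp hpa 2⟩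

end
end

section
/- Let p be a prime with p ≡ 7 (mod 8) and let a be the largest integer with a < √p − 1. Then 32·p^{5/2} < 4p·(p − a²)·(9p − a²) < 144·p^{5/2}. (Consequently, for the minimal order R of the corresponding isogeny class, the discriminant ratio satisfies 32 p^{5/2} < |Δ_R/Δ_{R⁺}| < 144 p^{5/2}.) -/
/-!
Write `s = √p`, so `p = s²` and `p^{5/2} = s⁵`, and `s - 2 ≤ a < s - 1` with `s ≥ 2`.
Then `d = p - a²` lies strictly between `2s - 1 ≥ s` and `4s`, while `9p - a²` lies between
`8p` and `9p`; multiplying out gives `32 s⁵ < 4p · d · (9p - a²) < 144 s⁵`.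
-/

section

variable {s a : ℝ}

lemma lt_sq_sub_sq_of_lt_sub_one (hs : 2 ≤ s) (ha₁ : s - 2 ≤ a) (ha₂ : a < s - 1) :
    s < s ^ 2 - a ^ 2 := by
  nlinarith

lemma sq_sub_sq_lt_four_mul (hs : 2 ≤ s) (ha : s - 2 ≤ a) : s ^ 2 - a ^ 2 < 4 * s := by
  nlinarith

theorem pow_five_bounds_of_sub_two_le_of_lt_sub_one (hs : 2 ≤ s) (ha₁ : s - 2 ≤ a)
    (ha₂ : a < s - 1) :
    32 * s ^ 5 < 4 * s ^ 2 * (s ^ 2 - a ^ 2) * (9 * s ^ 2 - a ^ 2) ∧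
      4 * s ^ 2 * (s ^ 2 - a ^ 2) * (9 * s ^ 2 - a ^ 2) < 144 * s ^ 5 := by
  have hd₁ := lt_sq_sub_sq_of_lt_sub_one hs ha₁ ha₂
  have hd₂ := sq_sub_sq_lt_four_mul hs ha₁
  have he₁ : 8 * s ^ 2 < 9 * s ^ 2 - a ^ 2 := by linarith
  have he₂ : 9 * s ^ 2 - a ^ 2 ≤ 9 * s ^ 2 := by nlinarith
  constructor
  · calc 32 * s ^ 5 = 4 * s ^ 2 * s * (8 * s ^ 2) := by ring
      _ < 4 * s ^ 2 * (s ^ 2 - a ^ 2) * (9 * s ^ 2 - a ^ 2) := by gcongr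
  · calc 4 * s ^ 2 * (s ^ 2 - a ^ 2) * (9 * s ^ 2 - a ^ 2)
        < 4 * s ^ 2 * (4 * s) * (9 * s ^ 2) :=
          mul_lt_mul (by gcongr) he₂ (by linarith) (by positivity)
      _ = 144 * s ^ 5 := by ring

end

theorem discriminant_ratio_bounds_general
    (p : ℕ) (hp7 : p % 8 = 7)
    (a : ℤ) (ha1 : (a : ℝ) < Real.sqrt p - 1) (ha2 : Real.sqrt p - 1 ≤ (a : ℝ) + 1) :
    32 * (p : ℝ) ^ ((5 : ℝ) / 2)
        < 4 * (p : ℝ) * ((p : ℝ) - (a : ℝ) ^ 2) * (9 * (p : ℝ) - (a : ℝ) ^ 2) ∧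
      4 * (p : ℝ) * ((p : ℝ) - (a : ℝ) ^ 2) * (9 * (p : ℝ) - (a : ℝ) ^ 2)
        < 144 * (p : ℝ) ^ ((5 : ℝ) / 2) := by
  have hp4 : (2 : ℝ) ^ 2 ≤ p := by norm_num; exact_mod_cast (by omega : 4 ≤ p)
  have hpow : (p : ℝ) ^ ((5 : ℝ) / 2) = √p ^ 5 := by
    rw [Real.rpow_div_two_eq_sqrt _ (Nat.cast_nonneg p)]
    exact_mod_cast Real.rpow_natCast _ 5
  have key :=
    pow_five_bounds_of_sub_two_le_of_lt_sub_one (Real.le_sqrt_of_sq_le hp4) (by linarith) ha1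
  rwa [Real.sq_sqrt (Nat.cast_nonneg p), ← hpow] at key

/-- Let `p` be a prime with `p ≡ 7 (mod 8)` and let `a` be the largest
integer with `a < √p − 1`.  Then `32·p^{5/2} < 4p·(p − a²)·(9p − a²) < 144·p^{5/2}`. -/
theorem discriminant_ratio_bounds
    (p : ℕ) (hp : p.Prime) (hp7 : p % 8 = 7)
    (a : ℤ) (ha1 : (a : ℝ) < Real.sqrt p - 1) (ha2 : Real.sqrt p - 1 ≤ (a : ℝ) + 1) :
    32 * (p : ℝ) ^ ((5 : ℝ) / 2)
        < 4 * (p : ℝ) * ((p : ℝ) - (a : ℝ) ^ 2) * (9 * (p : ℝ) - (a : ℝ) ^ 2) ∧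
      4 * (p : ℝ) * ((p : ℝ) - (a : ℝ) ^ 2) * (9 * (p : ℝ) - (a : ℝ) ^ 2)
        < 144 * (p : ℝ) ^ ((5 : ℝ) / 2) :=
  discriminant_ratio_bounds_general p hp7 a ha1 ha2
end
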